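/- arXiv:1802.08876 — 8 statements merged into one kernel-verified Lean document; each statement's English description precedes it below -/
import Mathlib

section
/- Let G and H be finite simple graphs with vertex sets V and W and adjacency matrices A and B. Then hom(T,G) = hom(T,H) holds for every tree T if and only if there exists an entrywise nonnegative real matrix X ∈ ℝ^{V×W} satisfying AX = XB, X·𝟙_W = 𝟙_V, and 𝟙_V^T·X = 𝟙_W^T (i.e., G and H are fractionally isomorphic). -/
/-!
Say that `y : V → ℝ` and `x : W → ℝ` correspond under `X` if `X x = y` and `Xᵀ y = x`. For a
fractional isomorphism `X`, expanding `∑ X v w (y v - x w)²` shows that it vanishes, so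
`y v = x w` whenever `X v w > 0`. Hence corresponding pairs are closed under pointwise products
and under `(y, x) ↦ (A y, B x)`, and contain `(1, 1)`. Count homomorphisms from a tree with
vertex weights given by corresponding pairs; peeling off the leaves one at a time, each absorbed
into the weight of its neighbour, shows that the counts in `G` and `H` agree.

Conversely, the numbers of homomorphisms from rooted trees sending the root to `v` form a
character `χ_v` of the monoid of rooted trees under identification of roots. By Dedekind's
independence of characters, equal tree counts make the multisets `{χ_v}` and `{χ_w}` equal, and
`χ_v` determines the multiset of characters of the neighbours of `v`. So the characters form a
common equitable partition of `G` and `H` with equal class sizes, and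
`X v w = [χ_v = χ_w] / |class of χ_v|` is a fractional isomorphism (Tinhofer).
-/

open Matrix

/-- The number of graph homomorphisms from `F` to `G`. -/
noncomputable def homCount {α β : Type*} (F : SimpleGraph α) (G : SimpleGraph β) : ℕ :=
  Nat.card (F →g G)

open Finset SimpleGraph

section FractionalIso

variable {V W : Type*} [Fintype V] [Fintype W]

structure IsFractionalIso (G : SimpleGraph V) (H : SimpleGraph W) [DecidableRel G.Adj]
    [DecidableRel H.Adj] (X : Matrix V W ℝ) : Prop where
  nonneg : ∀ v w, 0 ≤ X v w
  adjMatrix_mul : G.adjMatrix ℝ * X = X * H.adjMatrix ℝ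
  mulVec_one : X *ᵥ 1 = 1
  one_vecMul : 1 ᵥ* X = 1

def Corresponds (X : Matrix V W ℝ) (y : V → ℝ) (x : W → ℝ) : Prop :=
  X *ᵥ x = y ∧ Xᵀ *ᵥ y = x

lemma Corresponds.transpose {X : Matrix V W ℝ} {y : V → ℝ} {x : W → ℝ}
    (h : Corresponds X y x) : Corresponds Xᵀ x y :=
  ⟨h.2, by rw [transpose_transpose]; exact h.1⟩

namespace IsFractionalIso

variable {G : SimpleGraph V} {H : SimpleGraph W} [DecidableRel G.Adj] [DecidableRel H.Adj]
  {X : Matrix V W ℝ}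

lemma sum_row (hX : IsFractionalIso G H X) (v : V) : ∑ w, X v w = 1 := by
  simpa [mulVec, dotProduct] using congrFun hX.mulVec_one v

lemma sum_col (hX : IsFractionalIso G H X) (w : W) : ∑ v, X v w = 1 := by
  simpa [vecMul, dotProduct] using congrFun hX.one_vecMul w

lemma transpose (hX : IsFractionalIso G H X) : IsFractionalIso H G Xᵀ where
  nonneg w v := hX.nonneg v w
  adjMatrix_mul := by
    rw [← transpose_adjMatrix G, ← transpose_adjMatrix H, ← transpose_mul, ← transpose_mul,
      hX.adjMatrix_mul]
  mulVec_one := by rw [mulVec_transpose, hX.one_vecMul]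
  one_vecMul := by rw [vecMul_transpose, hX.mulVec_one]

lemma corresponds_one (hX : IsFractionalIso G H X) : Corresponds X 1 1 :=
  ⟨hX.mulVec_one, hX.transpose.mulVec_one⟩

lemma sum_eq_of_corresponds (hX : IsFractionalIso G H X) {y : V → ℝ} {x : W → ℝ}
    (h : Corresponds X y x) : ∑ v, y v = ∑ w, x w := by
  have := dotProduct_mulVec 1 X x
  rw [h.1, hX.one_vecMul] at this
  simpa [dotProduct] using this

/-- The variance `∑ X v w (y v - x w)²` expands to `‖x‖² - ‖y‖²`, and both `‖x‖²` and `‖y‖²`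
equal `y ⬝ᵥ X x`; so it vanishes, and with it every summand. -/
lemma eq_of_pos (hX : IsFractionalIso G H X) {y : V → ℝ} {x : W → ℝ} (h : Corresponds X y x)
    {v : V} {w : W} (hvw : 0 < X v w) : y v = x w := by
  have hyy : y ⬝ᵥ y = y ⬝ᵥ (X *ᵥ x) := by rw [h.1]
  have hxx : x ⬝ᵥ x = y ⬝ᵥ (X *ᵥ x) := by
    rw [dotProduct_mulVec, ← mulVec_transpose, h.2, dotProduct_comm]
  have hvar : ∑ v, ∑ w, X v w * (y v - x w) ^ 2 = 0 := by
    have expand : ∀ v w, X v w * (y v - x w) ^ 2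
        = X v w * y v ^ 2 - 2 * (y v * (X v w * x w)) + X v w * x w ^ 2 := fun _ _ => by ring
    simp only [expand, sum_add_distrib, sum_sub_distrib, ← mul_sum, ← sum_mul]
    rw [sum_comm (f := fun v w => X v w * x w ^ 2)]
    simp only [← sum_mul, hX.sum_row, hX.sum_col, one_mul]
    simp only [dotProduct, mulVec, sq] at hyy hxx ⊢
    linarith
  have hterm := (Fintype.sum_eq_zero_iff_of_nonneg fun v =>
    sum_nonneg fun w _ => mul_nonneg (hX.nonneg v w) (sq_nonneg _)).mp hvar
  have := (Fintype.sum_eq_zero_iff_of_nonneg fun w =>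
    mul_nonneg (hX.nonneg v w) (sq_nonneg _)).mp (congrFun hterm v)
  have := congrFun this w
  simp only [Pi.zero_apply, mul_eq_zero, hvw.ne', false_or, pow_eq_zero_iff two_ne_zero] at this
  linarith

lemma mulVec_mul (hX : IsFractionalIso G H X) {y₁ y₂ : V → ℝ} {x₁ x₂ : W → ℝ}
    (h₁ : Corresponds X y₁ x₁) (h₂ : Corresponds X y₂ x₂) : X *ᵥ (x₁ * x₂) = y₁ * y₂ := by
  ext v
  have hterm : ∀ w, X v w * (x₁ * x₂) w = X v w * (y₁ v * y₂ v) := fun w => by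
    rcases (hX.nonneg v w).eq_or_lt with h0 | hpos
    · simp [← h0]
    · simp [hX.eq_of_pos h₁ hpos, hX.eq_of_pos h₂ hpos]
  calc (X *ᵥ (x₁ * x₂)) v = ∑ w, X v w * (y₁ v * y₂ v) := sum_congr rfl fun w _ => hterm w
    _ = (y₁ * y₂) v := by rw [← sum_mul, hX.sum_row, one_mul, Pi.mul_apply]

lemma corresponds_mul (hX : IsFractionalIso G H X) {y₁ y₂ : V → ℝ} {x₁ x₂ : W → ℝ}
    (h₁ : Corresponds X y₁ x₁) (h₂ : Corresponds X y₂ x₂) : Corresponds X (y₁ * y₂) (x₁ * x₂) :=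
  ⟨hX.mulVec_mul h₁ h₂, hX.transpose.mulVec_mul h₁.transpose h₂.transpose⟩

lemma corresponds_adjMatrix_mulVec (hX : IsFractionalIso G H X) {y : V → ℝ} {x : W → ℝ}
    (h : Corresponds X y x) :
    Corresponds X (G.adjMatrix ℝ *ᵥ y) (H.adjMatrix ℝ *ᵥ x) := by
  constructor
  · rw [mulVec_mulVec, ← hX.adjMatrix_mul, ← mulVec_mulVec, h.1]
  · rw [mulVec_mulVec, ← hX.transpose.adjMatrix_mul, ← mulVec_mulVec, h.2]

end IsFractionalIso

end FractionalIso

section WeightedHomSum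

noncomputable instance {α V : Type*} [Finite α] [Finite V] (F : SimpleGraph α)
    (G : SimpleGraph V) : Fintype (F →g G) :=
  Fintype.ofFinite _

variable {α V : Type*} [Fintype α] [Fintype V]

noncomputable def weightedHomSum (F : SimpleGraph α) (G : SimpleGraph V) (y : α → V → ℝ) : ℝ :=
  ∑ h : F →g G, ∏ a, y a (h a)

lemma homCount_eq_weightedHomSum_one (F : SimpleGraph α) (G : SimpleGraph V) :
    (homCount F G : ℝ) = weightedHomSum F G fun _ => 1 := by
  simp [weightedHomSum, homCount, Nat.card_eq_fintype_card]

def homEquivOfSubsingleton [Subsingleton α] (F : SimpleGraph α) (G : SimpleGraph V) (r : α) :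
    (F →g G) ≃ V where
  toFun h := h r
  invFun v := ⟨fun _ => v, fun {a b} hab => absurd (Subsingleton.elim a b) hab.ne⟩
  left_inv h := by ext a; rw [Subsingleton.elim a r]; rfl
  right_inv _ := rfl

lemma weightedHomSum_of_subsingleton [Subsingleton α] (F : SimpleGraph α) (G : SimpleGraph V)
    (y : α → V → ℝ) (r : α) : weightedHomSum F G y = ∑ v, y r v :=
  Fintype.sum_equiv (homEquivOfSubsingleton F G r) _ _ fun _ => Fintype.prod_subsingleton _ r

variable [DecidableEq α] {F : SimpleGraph α} {ℓ p : α}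

def homEquivOfLeaf (G : SimpleGraph V) (hp : F.Adj ℓ p) (huniq : ∀ q, F.Adj ℓ q → q = p) :
    (F →g G) ≃ Σ h : F.induce {ℓ}ᶜ →g G, {z // G.Adj (h ⟨p, hp.ne'⟩) z} where
  toFun h := ⟨h.comp (Embedding.induce _).toHom, h ℓ, h.map_adj hp.symm⟩
  invFun s :=
    { toFun a := if ha : a = ℓ then s.2 else s.1 ⟨a, ha⟩
      map_rel' := by
        intro a b hab
        by_cases ha : a = ℓ <;> by_cases hb : b = ℓ
        · exact absurd (ha.trans hb.symm) hab.ne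
        · subst ha
          obtain rfl := huniq b hab
          simpa [hb] using s.2.2.symm
        · subst hb
          obtain rfl := huniq a hab.symm
          simpa [ha] using s.2.2
        · simpa [ha, hb] using s.1.map_adj (show (F.induce {ℓ}ᶜ).Adj ⟨a, ha⟩ ⟨b, hb⟩ from hab) }
  left_inv h := by
    ext a
    by_cases ha : a = ℓ
    · subst ha; simp
    · simp [ha]
  right_inv s := Sigma.subtype_ext (by ext a; exact dif_neg a.2) (by simp)

lemma weightedHomSum_eq_of_leaf (G : SimpleGraph V) [DecidableRel G.Adj] (hp : F.Adj ℓ p)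
    (huniq : ∀ q, F.Adj ℓ q → q = p) (y : α → V → ℝ) :
    weightedHomSum F G y = weightedHomSum (F.induce {ℓ}ᶜ) G
      fun a => y a * if a = ⟨p, hp.ne'⟩ then G.adjMatrix ℝ *ᵥ y ℓ else 1 := by
  rw [weightedHomSum, Fintype.sum_equiv (homEquivOfLeaf G hp huniq) _
    (fun s => ∏ a, y a ((homEquivOfLeaf G hp huniq).symm s a)) (fun _ => by simp),
    Fintype.sum_sigma, weightedHomSum]
  refine Fintype.sum_congr _ _ fun h => ?_
  have hsplit : ∀ z, ∏ a, y a ((homEquivOfLeaf G hp huniq).symm ⟨h, z⟩ a)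
      = y ℓ z * ∏ a : ↥({ℓ}ᶜ : Set α), y a (h a) := fun z => by
    rw [Fintype.prod_eq_mul_prod_subtype_ne _ ℓ]
    congr 1
    · simp [homEquivOfLeaf]
    · exact Fintype.prod_congr _ _ fun a => by simp [homEquivOfLeaf, a.2]; rfl
  simp only [hsplit, ← sum_mul, Pi.mul_apply, prod_mul_distrib]
  rw [← sum_subtype (G.neighborFinset _) (fun _ => G.mem_neighborFinset _ _), mul_comm]
  simp [ite_apply]

end WeightedHomSum

namespace IsFractionalIso

variable {V W : Type*} [Fintype V] [Fintype W] {G : SimpleGraph V} {H : SimpleGraph W}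
  [DecidableRel G.Adj] [DecidableRel H.Adj] {X : Matrix V W ℝ}

/-- Removing a leaf `ℓ` with neighbour `p` multiplies the weight at `p` by `A y_ℓ`, which keeps the
weights corresponding under `X`. -/
theorem weightedHomSum_eq_of_isTree (hX : IsFractionalIso G H X) {α : Type*} [Fintype α]
    {F : SimpleGraph α} (hF : F.IsTree) {y : α → V → ℝ} {x : α → W → ℝ}
    (hxy : ∀ a, Corresponds X (y a) (x a)) : weightedHomSum F G y = weightedHomSum F H x := by
  revert F y x
  refine Finite.induction_subsingleton_or_nontrivial (P := fun α => ∀ [Fintype α]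
    {F : SimpleGraph α}, F.IsTree → ∀ {y : α → V → ℝ} {x : α → W → ℝ},
      (∀ a, Corresponds X (y a) (x a)) → weightedHomSum F G y = weightedHomSum F H x) α ?_ ?_
  · intro α _ _ _ F hF y x hxy
    obtain ⟨r⟩ := hF.connected.nonempty
    rw [weightedHomSum_of_subsingleton, weightedHomSum_of_subsingleton _ _ _ r]
    exact hX.sum_eq_of_corresponds (hxy r)
  · intro α _ _ ih _ F hF y x hxy
    classical
    obtain ⟨ℓ, hℓ⟩ := hF.exists_vert_degree_one_of_nontrivial
    obtain ⟨p, hp, huniq⟩ := degree_eq_one_iff_existsUnique_adj.mp hℓ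
    rw [weightedHomSum_eq_of_leaf G hp huniq, weightedHomSum_eq_of_leaf H hp huniq]
    refine ih _ (Finite.card_subtype_lt (p := (· ∈ ({ℓ}ᶜ : Set α))) (x := ℓ) (by simp))
      ⟨hF.connected.induce_compl_singleton_of_degree_eq_one hℓ, hF.isAcyclic.induce _⟩
      fun a => hX.corresponds_mul (hxy a) ?_
    split_ifs
    exacts [hX.corresponds_adjMatrix_mulVec (hxy ℓ), hX.corresponds_one]

theorem homCount_eq_of_isTree (hX : IsFractionalIso G H X) {α : Type*} [Finite α]
    {T : SimpleGraph α} (hT : T.IsTree) : homCount T G = homCount T H := by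
  have := Fintype.ofFinite α
  exact_mod_cast (homCount_eq_weightedHomSum_one T G).trans <|
    (hX.weightedHomSum_eq_of_isTree hT fun _ => hX.corresponds_one).trans
      (homCount_eq_weightedHomSum_one T H).symm

end IsFractionalIso

/-- A consequence of Dedekind's independence of characters. -/
theorem Multiset.eq_of_forall_sum_map_apply_eq {M K : Type*} [MulOneClass M] [CommRing K]
    [IsDomain K] [CharZero K] {m₁ m₂ : Multiset (M →* K)}
    (h : ∀ a, (m₁.map (· a)).sum = (m₂.map (· a)).sum) : m₁ = m₂ := by
  classical
  set s := (m₁ + m₂).toFinset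
  have hsum : ∀ m : Multiset (M →* K), m.toFinset ⊆ s →
      ∀ a, (m.map (· a)).sum = ∑ χ ∈ s, (m.count χ : K) * χ a := fun m hm a => by
    rw [Finset.sum_multiset_map_count]
    simp_rw [nsmul_eq_mul]
    exact sum_subset hm fun χ _ hχ => by simp [Multiset.count_eq_zero.mpr (by simpa using hχ)]
  have hcount := linearIndependent_iff'ₛ.mp (linearIndependent_monoidHom M K) s
    (fun χ => (m₁.count χ : K)) (fun χ => (m₂.count χ : K)) <| by
      ext a
      simpa [Finset.sum_apply, ← hsum m₁ (by simp [s]), ← hsum m₂ (by simp [s])] using h a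
  ext χ
  by_cases hχ : χ ∈ s
  · exact_mod_cast hcount χ hχ
  · simp only [s, Multiset.mem_toFinset, Multiset.mem_add, not_or] at hχ
    rw [Multiset.count_eq_zero.mpr hχ.1, Multiset.count_eq_zero.mpr hχ.2]

lemma SimpleGraph.adjMatrix_mul_apply_eq_sum {V ι R : Type*} [Fintype V] [NonAssocSemiring R]
    (G : SimpleGraph V) [DecidableRel G.Adj] (M : Matrix V ι R) (v : V) (i : ι) :
    (G.adjMatrix R * M) v i = ∑ u ∈ G.neighborFinset v, M u i := by
  simp [mul_apply, neighborFinset_eq_filter, sum_filter]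

lemma SimpleGraph.mul_adjMatrix_apply_eq_sum {V ι R : Type*} [Fintype V] [NonAssocSemiring R]
    (G : SimpleGraph V) [DecidableRel G.Adj] (M : Matrix ι V R) (i : ι) (v : V) :
    (M * G.adjMatrix R) i v = ∑ u ∈ G.neighborFinset v, M i u := by
  simp [mul_apply, neighborFinset_eq_filter, sum_filter, G.adj_comm]

lemma Finset.count_map_val {ι κ : Type*} [DecidableEq κ] (s : Finset ι) (f : ι → κ) (b : κ) :
    (s.val.map f).count b = #{a ∈ s | f a = b} := by
  rw [Multiset.count_map, card_def, filter_val]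
  simp_rw [eq_comm]

section Equitable

variable {V W C : Type*} [Fintype V] [Fintype W] [DecidableEq C]

def IsEquitable (G : SimpleGraph V) [DecidableRel G.Adj] (c : V → C) (N : C → Multiset C) :
    Prop :=
  ∀ v, (G.neighborFinset v).val.map c = N (c v)

namespace IsEquitable

variable {G : SimpleGraph V} [DecidableRel G.Adj] {c : V → C} {N : C → Multiset C}

lemma count_eq (hc : IsEquitable G c N) (v : V) (β : C) :
    (N (c v)).count β = #{u | G.Adj v u ∧ c u = β} := by
  rw [← hc v, Finset.count_map_val, neighborFinset_eq_filter, filter_filter]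

lemma sum_neighborFinset_ite (hc : IsEquitable G c N) (v : V) (β : C) (r : ℝ) :
    ∑ u ∈ G.neighborFinset v, (if c u = β then r else 0) = (N (c v)).count β * r := by
  rw [← sum_filter, sum_const, nsmul_eq_mul, hc.count_eq, neighborFinset_eq_filter, filter_filter]

/-- Both sides count the ordered edges from color `α` to color `β`. -/
lemma card_mul_count_comm (hc : IsEquitable G c N) (α β : C) :
    #{v | c v = α} * (N α).count β = #{v | c v = β} * (N β).count α := by
  have hedges : ∀ α β, #{v | c v = α} * (N α).count β
      = ∑ v, ∑ u, if c v = α ∧ G.Adj v u ∧ c u = β then 1 else 0 := fun α β => by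
    rw [card_eq_sum_ones, sum_filter, sum_mul]
    refine sum_congr rfl fun v _ => ?_
    split_ifs with hv
    · rw [one_mul, ← hv, hc.count_eq, card_eq_sum_ones, sum_filter]
      simp [hv]
    · simp [hv]
  rw [hedges, hedges, sum_comm]
  refine sum_congr rfl fun v _ => sum_congr rfl fun u _ => ?_
  exact if_congr (by rw [G.adj_comm]; tauto) rfl rfl

end IsEquitable

/-- Tinhofer's construction. -/
theorem IsEquitable.exists_isFractionalIso {G : SimpleGraph V} {H : SimpleGraph W}
    [DecidableRel G.Adj] [DecidableRel H.Adj] {cG : V → C} {cH : W → C} {N : C → Multiset C}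
    (hG : IsEquitable G cG N) (hH : IsEquitable H cH N)
    (hcard : univ.val.map cG = univ.val.map cH) : ∃ X, IsFractionalIso G H X := by
  replace hcard : ∀ γ, #{v | cG v = γ} = #{w | cH w = γ} := fun γ => by
    rw [← Finset.count_map_val, ← Finset.count_map_val, hcard]
  set n : C → ℝ := fun γ => #{v | cG v = γ}
  have hnG : ∀ v, n (cG v) ≠ 0 := fun v => by
    simpa only [n, Nat.cast_ne_zero] using card_pos.mpr ⟨v, by simp⟩ |>.ne'
  have hnH : ∀ w, n (cH w) ≠ 0 := fun w => by
    simpa only [n, Nat.cast_ne_zero, hcard] using card_pos.mpr ⟨w, by simp⟩ |>.ne'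
  set X : Matrix V W ℝ := fun v w => if cG v = cH w then (n (cH w))⁻¹ else 0
  have hX' : ∀ v w, X v w = if cH w = cG v then (n (cG v))⁻¹ else 0 := fun v w => by
    simp only [X, eq_comm (a := cH w)]
    split_ifs with h <;> simp [h]
  refine ⟨X, ⟨fun v w => ?_, ?_, ?_, ?_⟩⟩
  · simp only [X]; split_ifs <;> positivity
  · ext v w
    rw [adjMatrix_mul_apply_eq_sum, mul_adjMatrix_apply_eq_sum, hG.sum_neighborFinset_ite]
    simp only [hX', hH.sum_neighborFinset_ite]
    have := hG.card_mul_count_comm (cG v) (cH w)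
    field_simp [hnG v, hnH w]
    simp only [n]
    norm_cast
    rw [mul_comm]
    exact this
  · ext v
    simp only [mulVec, dotProduct, hX', Pi.one_apply, mul_one, ← sum_filter, sum_const,
      nsmul_eq_mul, ← hcard]
    exact mul_inv_cancel₀ (hnG v)
  · ext w
    simp only [vecMul, dotProduct, Pi.one_apply, one_mul, X, ← sum_filter, sum_const, nsmul_eq_mul]
    exact mul_inv_cancel₀ (hnH w)

end Equitable

section GraftHom

variable {α β V : Type*} (F₁ : SimpleGraph α) (F₂ : SimpleGraph β) (a : α) (b : β)
  (G : SimpleGraph V) (v : V)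

def SimpleGraph.sumSupEdgeHomEquiv :
    {h : (F₁ ⊕g F₂) ⊔ edge (Sum.inl a) (Sum.inr b) →g G // h (Sum.inr b) = v} ≃
      Σ u : G.neighborSet v, {h₁ : F₁ →g G // h₁ a = u} × {h₂ : F₂ →g G // h₂ b = v} where
  toFun h :=
    ⟨⟨h.1 (Sum.inl a), by
        simpa [h.2] using (h.1.map_adj (v := Sum.inl a) (w := Sum.inr b)
          (Or.inr (by simp [edge_adj]))).symm⟩,
      ⟨h.1.comp ((Hom.ofLE le_sup_left).comp Embedding.sumInl.toHom), rfl⟩,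
      ⟨h.1.comp ((Hom.ofLE le_sup_left).comp Embedding.sumInr.toHom), h.2⟩⟩
  invFun s :=
    ⟨{ toFun := Sum.elim s.2.1.1 s.2.2.1
       map_rel' := by
         obtain ⟨⟨u, hu⟩, ⟨h₁, h₁a⟩, ⟨h₂, h₂b⟩⟩ := s
         rintro (x | x) (y | y) hxy <;> simp [edge_adj] at hxy
         · exact h₁.map_adj hxy
         · obtain ⟨rfl, rfl⟩ := hxy
           simpa [h₁a, h₂b] using hu.symm
         · obtain ⟨rfl, rfl⟩ := hxy
           simpa [h₁a, h₂b] using hu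
         · exact h₂.map_adj hxy }, s.2.2.2⟩
  left_inv h := by ext (x | x) <;> rfl
  right_inv := by
    rintro ⟨⟨u, hu⟩, ⟨h₁, h₁a⟩, h₂⟩
    simp only at h₁a
    subst h₁a
    rfl

end GraftHom

/-- `graft t s` is `s` with one more child of the root, at which a copy of `t` hangs. -/
inductive RTree : Type
  | point : RTree
  | graft : RTree → RTree → RTree

namespace RTree

@[reducible] def vert : RTree → Type
  | point => Unit
  | graft t s => t.vert ⊕ s.vert

theorem finite_vert : ∀ t : RTree, Finite t.vert
  | point => inferInstanceAs (Finite Unit)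
  | graft t s => have := finite_vert t; have := finite_vert s; inferInstanceAs (Finite (_ ⊕ _))

instance (t : RTree) : Finite t.vert := finite_vert t

def root : (t : RTree) → t.vert
  | point => ()
  | graft _ s => Sum.inr s.root

def graph : (t : RTree) → SimpleGraph t.vert
  | point => ⊥
  | graft t s => (t.graph ⊕g s.graph) ⊔ edge (Sum.inl t.root) (Sum.inr s.root)

theorem isTree_graph : ∀ t : RTree, t.graph.IsTree
  | point => IsTree.of_subsingleton (V := Unit)
  | graft t s => by
    have ht := isTree_iff_connected_and_card.mp t.isTree_graph
    have hs := isTree_iff_connected_and_card.mp s.isTree_graph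
    rw [graph, isTree_iff_connected_and_card]
    refine ⟨ht.1.sum_sup_edge hs.1, ?_⟩
    have hnew : s(Sum.inl t.root, Sum.inr s.root) ∉ (t.graph ⊕g s.graph).edgeSet :=
      not_adj_sum_inl_inr (G := t.graph) (H := s.graph) t.root s.root
    rw [edgeSet_sup, edgeSet_edge_of_ne Sum.inl_ne_inr, Set.union_singleton,
      Nat.card_coe_set_eq, Set.ncard_insert_of_notMem hnew, ← Nat.card_coe_set_eq,
      Nat.card_congr edgeSetSumEquiv, Nat.card_sum, vert, Nat.card_sum]
    omega

/-- Identifies the roots of two rooted trees. -/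
def join : RTree → RTree → RTree
  | point, s => s
  | graft a t, s => graft a (join t s)

instance : MulOneClass RTree where
  one := point
  mul := join
  one_mul _ := rfl
  mul_one t := by
    induction t with
    | point => rfl
    | graft a t _ ih => exact congrArg (graft a) ih

variable {V : Type*} [Fintype V] (G : SimpleGraph V) [DecidableRel G.Adj]

def rootedHomCount : RTree → V → ℕ
  | point, _ => 1
  | graft t s, v => (∑ u ∈ G.neighborFinset v, t.rootedHomCount u) * s.rootedHomCount v

theorem card_hom_root_eq : ∀ (t : RTree) (v : V),
    Nat.card {h : t.graph →g G // h t.root = v} = t.rootedHomCount G v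
  | point, v => (Nat.card_congr ((homEquivOfSubsingleton point.graph G ()).subtypeEquiv
      (q := (· = v)) fun _ => Iff.rfl)).trans Nat.card_unique
  | graft t s, v => by
    refine (Nat.card_congr (sumSupEdgeHomEquiv t.graph s.graph t.root s.root G v)).trans ?_
    rw [Nat.card_sigma, rootedHomCount, sum_mul, ← Finset.sum_coe_sort (G.neighborFinset v)]
    refine Fintype.sum_equiv (Equiv.subtypeEquivRight fun _ => (mem_neighborFinset G v _).symm)
      _ _ fun u => ?_
    rw [Nat.card_prod, card_hom_root_eq t, card_hom_root_eq s]
    rfl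

theorem homCount_graph (t : RTree) : homCount t.graph G = ∑ v, t.rootedHomCount G v := by
  rw [homCount, ← Nat.card_congr (Equiv.sigmaFiberEquiv fun h : t.graph →g G => h t.root),
    Nat.card_sigma]
  exact sum_congr rfl fun v _ => card_hom_root_eq G t v

theorem rootedHomCount_mul (t s : RTree) (v : V) :
    (t * s).rootedHomCount G v = t.rootedHomCount G v * s.rootedHomCount G v := by
  induction t with
  | point => exact (one_mul _).symm
  | graft a t _ ih =>
    change (graft a (t * s)).rootedHomCount G v = _
    rw [rootedHomCount, rootedHomCount, ih, mul_assoc]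

def character (v : V) : RTree →* ℚ where
  toFun t := t.rootedHomCount G v
  map_one' := by simp [rootedHomCount]
  map_mul' t s := by simp [rootedHomCount_mul]

lemma character_graft_one (t : RTree) (v : V) :
    character G v (graft t 1) = (((G.neighborFinset v).val.map (character G)).map (· t)).sum := by
  simp only [character, MonoidHom.coe_mk, OneHom.coe_mk, Multiset.map_map, Function.comp_def]
  rw [← Finset.sum_eq_multiset_sum]
  exact_mod_cast mul_one _

open Classical in
/-- The multiset of characters of the neighbours of a vertex with character `χ`, recovered from
`χ` alone. -/
noncomputable def neighborProfile (χ : RTree →* ℚ) : Multiset (RTree →* ℚ) :=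
  if h : ∃ m : Multiset (RTree →* ℚ), ∀ t, (m.map (· t)).sum = χ (graft t 1) then h.choose else 0

theorem isEquitable_character : IsEquitable G (character G) neighborProfile := fun v => by
  have hex : ∃ m : Multiset (RTree →* ℚ), ∀ t, (m.map (· t)).sum = character G v (graft t 1) :=
    ⟨_, fun t => (character_graft_one G t v).symm⟩
  rw [neighborProfile, dif_pos hex]
  exact Multiset.eq_of_forall_sum_map_apply_eq fun t =>
    ((character_graft_one G t v).symm.trans (hex.choose_spec t).symm)

end RTree

lemma homCount_congr {α β γ : Type*} {F : SimpleGraph α} {F' : SimpleGraph β} (e : F ≃g F')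
    (G : SimpleGraph γ) : homCount F G = homCount F' G :=
  Nat.card_congr (e.homCongr .refl)

theorem homCount_eq_of_forall_fin_isTree {V W : Type*} {G : SimpleGraph V} {H : SimpleGraph W}
    (hyp : ∀ (n : ℕ) (T : SimpleGraph (Fin n)), T.IsTree → homCount T G = homCount T H)
    {α : Type*} [Finite α] {T : SimpleGraph α} (hT : T.IsTree) : homCount T G = homCount T H := by
  let e := Iso.map (Finite.equivFin α) T
  rw [homCount_congr e, homCount_congr e]
  exact hyp _ _ (e.isTree_iff.mp hT)

theorem exists_isFractionalIso_of_homCount_eq {V W : Type*} [Fintype V] [Fintype W]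
    {G : SimpleGraph V} {H : SimpleGraph W} [DecidableRel G.Adj] [DecidableRel H.Adj]
    (hyp : ∀ t : RTree, homCount t.graph G = homCount t.graph H) : ∃ X, IsFractionalIso G H X := by
  classical
  have hchar : univ.val.map (RTree.character G) = univ.val.map (RTree.character H) :=
    Multiset.eq_of_forall_sum_map_apply_eq fun t => by
      simp only [Multiset.map_map, Function.comp_def, ← Finset.sum_eq_multiset_sum,
        RTree.character, MonoidHom.coe_mk, OneHom.coe_mk]
      exact_mod_cast (RTree.homCount_graph G t).symm.trans <|
        (hyp t).trans (RTree.homCount_graph H t)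
  exact (RTree.isEquitable_character G).exists_isFractionalIso (RTree.isEquitable_character H) hchar

theorem stmt0 {V W : Type*} [Fintype V] [Fintype W]
    (G : SimpleGraph V) (H : SimpleGraph W)
    [DecidableRel G.Adj] [DecidableRel H.Adj] :
    (∀ (n : ℕ) (T : SimpleGraph (Fin n)), T.IsTree → homCount T G = homCount T H) ↔
    (∃ X : Matrix V W ℝ, (∀ v w, 0 ≤ X v w) ∧
      G.adjMatrix ℝ * X = X * H.adjMatrix ℝ ∧
      X *ᵥ (fun _ => 1) = (fun _ => 1) ∧
      (fun _ => (1 : ℝ)) ᵥ* X = (fun _ => 1)) := by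
  constructor
  · intro hyp
    obtain ⟨X, hX⟩ := exists_isFractionalIso_of_homCount_eq fun t =>
      homCount_eq_of_forall_fin_isTree hyp t.isTree_graph
    exact ⟨X, hX.nonneg, hX.adjMatrix_mul, hX.mulVec_one, hX.one_vecMul⟩
  · rintro ⟨X, hX₀, hXA, hX₁, hX₁'⟩ n T hT
    exact IsFractionalIso.homCount_eq_of_isTree ⟨hX₀, hXA, hX₁, hX₁'⟩ hT
end

section
/- Let G and H be finite simple graphs with vertex sets V and W and adjacency matrices A and B. Then 𝟙_V^T·A^ℓ·𝟙_V = 𝟙_W^T·B^ℓ·𝟙_W holds for every ℓ ∈ ℕ (equivalently, G and H have the same number of walks of length ℓ for every ℓ, i.e. hom(P_ℓ,G) = hom(P_ℓ,H) for every path P_ℓ) if and only if there exists a real matrix X ∈ ℝ^{V×W} satisfying AX = XB, X·𝟙_W = 𝟙_V, and 𝟙_V^T·X = 𝟙_W^T. -/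
/-!
Write `U` and `U'` for the matrices whose columns are the Krylov vectors `Aʲ𝟙` and `Bʲ𝟙`,
`j < m`. Since `A` is symmetric, `(Aⁱ𝟙)ᵀ(Aʲ𝟙) = 𝟙ᵀAⁱ⁺ʲ𝟙`, so equal walk counts say exactly
that the two Krylov families have the same Gram matrix `M = UᵀU = U'ᵀU'`; in particular `U` and
`U'` have the same kernel. For a generalized inverse `N` of `M`, the matrix `X = U N U'ᵀ` sends
`Bʲ𝟙` to `Aʲ𝟙` and `Xᵀ` sends `Aʲ𝟙` back to `Bʲ𝟙`, once `m` is large enough (by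
Cayley–Hamilton) for `U` and `U'` to span the whole Krylov spaces. Taking `j = 0` gives the
two stochasticity conditions, and `Z = AX - XB` kills every `Bʲ𝟙`, whence `Z Zᵀ = 0`.
The converse is the computation `𝟙ᵀAˡ𝟙 = 𝟙ᵀAˡX𝟙 = 𝟙ᵀXBˡ𝟙 = 𝟙ᵀBˡ𝟙`.
-/

open Matrix Polynomial

section Krylov

variable {R α : Type*} [CommRing R] [Fintype α] [DecidableEq α]

def krylovMatrix (A : Matrix α α R) (v : α → R) (m : ℕ) : Matrix α (Fin m) R :=
  of fun x i => (A ^ (i : ℕ) *ᵥ v) x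

variable {A : Matrix α α R} {v : α → R}

lemma pow_mulVec_dotProduct_pow_mulVec (hA : Aᵀ = A) (i j : ℕ) :
    (A ^ i *ᵥ v) ⬝ᵥ (A ^ j *ᵥ v) = v ⬝ᵥ (A ^ (i + j) *ᵥ v) := by
  rw [dotProduct_comm, dotProduct_mulVec, ← mulVec_transpose, transpose_pow, hA, mulVec_mulVec,
    ← pow_add, dotProduct_comm, add_comm]

lemma krylovMatrix_transpose_mulVec (m : ℕ) (x : α → R) :
    (krylovMatrix A v m)ᵀ *ᵥ x = fun i : Fin m => (A ^ (i : ℕ) *ᵥ v) ⬝ᵥ x := rfl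

lemma krylovMatrix_transpose_mul_self (m : ℕ) :
    (krylovMatrix A v m)ᵀ * krylovMatrix A v m =
      of fun i j : Fin m => (A ^ (i : ℕ) *ᵥ v) ⬝ᵥ (A ^ (j : ℕ) *ᵥ v) := rfl

section Pair

variable {β : Type*} [Fintype β] [DecidableEq β] {B : Matrix β β R} {w : β → R}

lemma krylovMatrix_transpose_mulVec_pow_mulVec_eq (hA : Aᵀ = A) (hB : Bᵀ = B)
    (h : ∀ ℓ : ℕ, v ⬝ᵥ (A ^ ℓ *ᵥ v) = w ⬝ᵥ (B ^ ℓ *ᵥ w)) (m j : ℕ) :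
    (krylovMatrix A v m)ᵀ *ᵥ (A ^ j *ᵥ v) = (krylovMatrix B w m)ᵀ *ᵥ (B ^ j *ᵥ w) := by
  ext i
  simp only [krylovMatrix_transpose_mulVec, pow_mulVec_dotProduct_pow_mulVec hA,
    pow_mulVec_dotProduct_pow_mulVec hB, h]

lemma krylovMatrix_transpose_mul_self_eq (hA : Aᵀ = A) (hB : Bᵀ = B)
    (h : ∀ ℓ : ℕ, v ⬝ᵥ (A ^ ℓ *ᵥ v) = w ⬝ᵥ (B ^ ℓ *ᵥ w)) (m : ℕ) :
    (krylovMatrix A v m)ᵀ * krylovMatrix A v m = (krylovMatrix B w m)ᵀ * krylovMatrix B w m := by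
  ext i j
  simp only [krylovMatrix_transpose_mul_self, of_apply, pow_mulVec_dotProduct_pow_mulVec hA,
    pow_mulVec_dotProduct_pow_mulVec hB, h]

end Pair

lemma exists_krylovMatrix_mulVec_eq_pow_mulVec [Nontrivial R] {m : ℕ}
    (hm : Fintype.card α < m) (j : ℕ) : ∃ c, krylovMatrix A v m *ᵥ c = A ^ j *ᵥ v := by
  set p := X ^ j %ₘ A.charpoly
  have hp : p.natDegree < m :=
    (natDegree_modByMonic_le _ A.charpoly_monic).trans_lt (A.charpoly_natDegree_eq_dim ▸ hm)
  refine ⟨fun i => p.coeff i, ?_⟩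
  rw [pow_eq_aeval_mod_charpoly, aeval_eq_sum_range' hp, ← Fin.sum_univ_eq_sum_range, sum_mulVec]
  ext x
  simp [krylovMatrix, mulVec, dotProduct, Finset.sum_apply, smul_mulVec, mul_comm]

lemma mul_krylovMatrix_eq_zero {β : Type*} [Fintype β] {Z : Matrix β α R}
    (h : ∀ k, Z *ᵥ (A ^ k *ᵥ v) = 0) (m : ℕ) : Z * krylovMatrix A v m = 0 := by
  ext x i
  simpa [krylovMatrix, mul_apply, mulVec, dotProduct] using congrFun (h i) x

end Krylov

namespace Matrix

variable {α β ι : Type*} [Fintype α] [Fintype β] [Fintype ι]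

lemma exists_mul_mul_eq_self {K : Type*} [Field K] [DecidableEq ι] (M : Matrix ι ι K) :
    ∃ N, M * N * M = M := by
  obtain ⟨P, Q, e, hP, hQ, hPMQ⟩ := M.exists_rank_normal_form
  rw [isUnit_iff_isUnit_det] at hP hQ
  have hidem : P * M * Q * (P * M * Q) = P * M * Q := by
    rw [hPMQ, submatrix_mul_equiv, fromBlocks_multiply]
    simp
  refine ⟨Q * P, ?_⟩
  calc M * (Q * P) * M = P⁻¹ * (P * M * Q * (P * M * Q)) * Q⁻¹ := by
        simp only [Matrix.mul_assoc, mul_nonsing_inv _ hQ, Matrix.mul_one,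
          nonsing_inv_mul_cancel_left _ _ hP]
    _ = M := by
        rw [hidem]
        simp only [Matrix.mul_assoc, mul_nonsing_inv _ hQ, Matrix.mul_one,
          nonsing_inv_mul_cancel_left _ _ hP]

lemma mul_mul_transpose_mulVec_eq {R : Type*} [CommSemiring R] {U : Matrix α ι R}
    {W : Matrix β ι R} {N : Matrix ι ι R} (hN : U * N * (Uᵀ * U) = U) {x : α → R} {y : β → R}
    (hx : ∃ c, U *ᵥ c = x) (hxy : Uᵀ *ᵥ x = Wᵀ *ᵥ y) : (U * N * Wᵀ) *ᵥ y = x := by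
  obtain ⟨c, rfl⟩ := hx
  rw [← mulVec_mulVec, ← hxy, mulVec_mulVec, mulVec_mulVec, Matrix.mul_assoc (U * N), hN]

lemma mul_mul_transpose_mul_self_eq_self [DecidableEq ι] {U : Matrix α ι ℝ} {N : Matrix ι ι ℝ}
    (hN : Uᵀ * U * N * (Uᵀ * U) = Uᵀ * U) : U * N * (Uᵀ * U) = U := by
  have h : Uᵀ * U * (N * (Uᵀ * U) - 1) = 0 := by
    rw [Matrix.mul_sub, Matrix.mul_one, ← Matrix.mul_assoc, hN, sub_self]
  rw [← conjTranspose_eq_transpose_of_trivial, conjTranspose_mul_self_mul_eq_zero,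
    Matrix.mul_sub, Matrix.mul_one, sub_eq_zero, conjTranspose_eq_transpose_of_trivial] at h
  rwa [Matrix.mul_assoc]

lemma mul_eq_mul_of_sub_mul_eq_zero {A : Matrix α α ℝ} {B : Matrix β β ℝ} (hA : Aᵀ = A)
    (hB : Bᵀ = B) {X : Matrix α β ℝ} {Y : Matrix α ι ℝ} {W : Matrix β ι ℝ} (hX : X = Y * Wᵀ)
    (hW : (A * X - X * B) * W = 0) (hBW : (A * X - X * B) * B * W = 0) :
    A * X = X * B := by
  have hZ : (A * X - X * B) * (A * X - X * B)ᵀ = 0 := by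
    have hZt : (A * X - X * B)ᵀ = W * (Yᵀ * A) - B * W * Yᵀ := by
      rw [transpose_sub, transpose_mul, transpose_mul, hX, transpose_mul, transpose_transpose,
        hA, hB, Matrix.mul_assoc, Matrix.mul_assoc]
    simp only [hZt, Matrix.mul_sub, ← Matrix.mul_assoc, hW, hBW, Matrix.zero_mul, sub_zero]
  rwa [← conjTranspose_eq_transpose_of_trivial, self_mul_conjTranspose_eq_zero, sub_eq_zero] at hZ

lemma pow_mul_eq_mul_pow {R : Type*} [Semiring R] [DecidableEq α] [DecidableEq β]
    {A : Matrix α α R} {B : Matrix β β R} {X : Matrix α β R} (h : A * X = X * B) (k : ℕ) :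
    A ^ k * X = X * B ^ k := by
  induction k with
  | zero => simp
  | succ k ih =>
    rw [pow_succ, Matrix.mul_assoc, h, ← Matrix.mul_assoc, ih, Matrix.mul_assoc, ← pow_succ]

end Matrix

section Intertwiner

variable {V W : Type*} [Fintype V] [Fintype W] [DecidableEq V] [DecidableEq W]

lemma dotProduct_pow_mulVec_eq_of_mul_eq_mul {R : Type*} [CommSemiring R] {A : Matrix V V R}
    {B : Matrix W W R} {X : Matrix V W R} {v : V → R} {w : W → R} (hX : A * X = X * B)
    (hXw : X *ᵥ w = v) (hvX : v ᵥ* X = w) (ℓ : ℕ) : v ⬝ᵥ (A ^ ℓ *ᵥ v) = w ⬝ᵥ (B ^ ℓ *ᵥ w) := by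
  rw [← hXw, mulVec_mulVec, pow_mul_eq_mul_pow hX, ← mulVec_mulVec, dotProduct_mulVec, hXw, hvX]

lemma exists_mul_eq_mul_of_dotProduct_pow_mulVec_eq {A : Matrix V V ℝ} {B : Matrix W W ℝ}
    (hA : Aᵀ = A) (hB : Bᵀ = B) {v : V → ℝ} {w : W → ℝ}
    (h : ∀ ℓ : ℕ, v ⬝ᵥ (A ^ ℓ *ᵥ v) = w ⬝ᵥ (B ^ ℓ *ᵥ w)) :
    ∃ X : Matrix V W ℝ, A * X = X * B ∧ X *ᵥ w = v ∧ v ᵥ* X = w := by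
  set m := Fintype.card V + Fintype.card W + 1
  set U := krylovMatrix A v m
  set U' := krylovMatrix B w m
  have hUU' := krylovMatrix_transpose_mulVec_pow_mulVec_eq hA hB h m
  have hgram : Uᵀ * U = U'ᵀ * U' := krylovMatrix_transpose_mul_self_eq hA hB h m
  obtain ⟨N, hN⟩ := (Uᵀ * U).exists_mul_mul_eq_self
  have hNU : U * N * (Uᵀ * U) = U := mul_mul_transpose_mul_self_eq_self hN
  have hNU' : U' * Nᵀ * (U'ᵀ * U') = U' := by
    refine mul_mul_transpose_mul_self_eq_self ?_
    rw [← hgram]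
    simpa [transpose_mul, Matrix.mul_assoc] using congrArg transpose hN
  set X := U * N * U'ᵀ
  have hXB : ∀ j, X *ᵥ (B ^ j *ᵥ w) = A ^ j *ᵥ v := fun j =>
    mul_mul_transpose_mulVec_eq hNU (exists_krylovMatrix_mulVec_eq_pow_mulVec (by omega) j)
      (hUU' j)
  have hXA : ∀ j, Xᵀ *ᵥ (A ^ j *ᵥ v) = B ^ j *ᵥ w := fun j => by
    have hXt : Xᵀ = U' * Nᵀ * Uᵀ := by simp [X, transpose_mul, Matrix.mul_assoc]
    exact hXt ▸ mul_mul_transpose_mulVec_eq hNU'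
      (exists_krylovMatrix_mulVec_eq_pow_mulVec (by omega) j) (hUU' j).symm
  have hZ : ∀ k, (A * X - X * B) *ᵥ (B ^ k *ᵥ w) = 0 := fun k => by
    rw [sub_mulVec, ← mulVec_mulVec, hXB, ← mulVec_mulVec, mulVec_mulVec (M := B), ← pow_succ',
      hXB, mulVec_mulVec, ← pow_succ', sub_self]
  refine ⟨X, ?_, by simpa using hXB 0, by simpa [← mulVec_transpose] using hXA 0⟩
  refine mul_eq_mul_of_sub_mul_eq_zero hA hB (Y := U * N) rfl (mul_krylovMatrix_eq_zero hZ m) ?_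
  refine mul_krylovMatrix_eq_zero (fun k => ?_) m
  rw [← mulVec_mulVec, mulVec_mulVec (M := B), ← pow_succ', hZ]

end Intertwiner

theorem stmt2 {V W : Type*} [Fintype V] [Fintype W] [DecidableEq V] [DecidableEq W]
    (G : SimpleGraph V) (H : SimpleGraph W)
    [DecidableRel G.Adj] [DecidableRel H.Adj] :
    (∀ ℓ : ℕ,
        (fun _ => (1 : ℝ)) ⬝ᵥ ((G.adjMatrix ℝ ^ ℓ) *ᵥ (fun _ => 1)) =
        (fun _ => (1 : ℝ)) ⬝ᵥ ((H.adjMatrix ℝ ^ ℓ) *ᵥ (fun _ => 1))) ↔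
    (∃ X : Matrix V W ℝ,
      G.adjMatrix ℝ * X = X * H.adjMatrix ℝ ∧
      X *ᵥ (fun _ => 1) = (fun _ => 1) ∧
      (fun _ => (1 : ℝ)) ᵥ* X = (fun _ => 1)) :=
  ⟨exists_mul_eq_mul_of_dotProduct_pow_mulVec_eq G.transpose_adjMatrix H.transpose_adjMatrix,
    fun ⟨_, hX, hXw, hvX⟩ => dotProduct_pow_mulVec_eq_of_mul_eq_mul hX hXw hvX⟩
end

section
/- Let A ∈ ℝ^{n×n} and B ∈ ℝ^{m×m} be real symmetric matrices such that 𝟙_n^T·A^ℓ·𝟙_n = 𝟙_m^T·B^ℓ·𝟙_m holds for every ℓ ∈ ℕ. Then for every λ ∈ ℝ, the Euclidean norm of the orthogonal projection of the all-ones vector 𝟙_n onto the eigenspace ker(A − λI_n) equals the Euclidean norm of the orthogonal projection of 𝟙_m onto ker(B − λI_m). In particular, A and B have the same set of useful eigenvalues, i.e. eigenvalues whose eigenspace is not orthogonal to the all-ones vector. -/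
/-!
Expanding a vector `x` along the eigenspaces of a symmetric matrix `A` gives
`xᵀ A^ℓ x = ∑ λ, λ^ℓ ‖P_λ x‖²`, where `P_λ` is the orthogonal projection onto `ker (A - λ I)`.
Hence the hypothesis says that the finitely supported weights `λ ↦ ‖P_λ 𝟙‖²` of `A` and of `B`
have the same moments. On a finite set of reals containing both spectra, a Vandermonde matrix is
invertible, so the weights agree at every `λ`.
-/

open Matrix Finset Module.End
open scoped RealInnerProductSpace

theorem Finset.eq_of_forall_sum_pow_mul_eq {R : Type*} [CommRing R] [IsDomain R] {s : Finset R}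
    {f g : R → R} (h : ∀ ℓ : ℕ, ∑ x ∈ s, x ^ ℓ * f x = ∑ x ∈ s, x ^ ℓ * g x) {μ : R}
    (hμ : μ ∈ s) : f μ = g μ := by
  set e := s.equivFin.symm
  have hzero := Matrix.eq_zero_of_forall_pow_sum_mul_pow_eq_zero (f := fun i => (e i : R))
    (v := fun i => f (e i) - g (e i)) (Subtype.coe_injective.comp e.injective) fun ℓ => by
      rw [e.sum_comp (fun x : s => (f x - g x) * (x : R) ^ (ℓ : ℕ)),
        s.sum_coe_sort (fun x => (f x - g x) * x ^ (ℓ : ℕ))]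
      simp only [sub_mul, sum_sub_distrib, mul_comm (f _), mul_comm (g _), h, sub_self]
  simpa [sub_eq_zero, e] using congrFun hzero (s.equivFin ⟨μ, hμ⟩)

theorem Submodule.inner_starProjection_self_eq_norm_sq {𝕜 E : Type*} [RCLike 𝕜]
    [NormedAddCommGroup E] [InnerProductSpace 𝕜 E] (K : Submodule 𝕜 E)
    [K.HasOrthogonalProjection] (x : E) :
    inner 𝕜 x (K.starProjection x) = (‖K.orthogonalProjectionOnto x‖ ^ 2 : ℝ) := by
  rw [K.starProjection_apply, ← K.inner_orthogonalProjectionOnto_eq_of_mem_right,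
    inner_self_eq_norm_sq_to_K, RCLike.ofReal_pow]

namespace LinearMap.IsSymmetric

variable {𝕜 E : Type*} [RCLike 𝕜] [NormedAddCommGroup E] [InnerProductSpace 𝕜 E]
  [FiniteDimensional 𝕜 E] {T : E →ₗ[𝕜] E} {s : Finset 𝕜}

theorem sum_starProjection_eigenspace (hT : T.IsSymmetric)
    (hs : ∀ μ, HasEigenvalue T μ → μ ∈ s) (x : E) :
    ∑ μ ∈ s, (eigenspace T μ).starProjection x = x := by
  have hsup : ⨆ μ : s, eigenspace T μ = ⊤ := by
    refine eq_top_iff.2 <| (Submodule.orthogonal_eq_bot_iff.1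
      hT.orthogonalComplement_iSup_eigenspaces_eq_bot).ge.trans <| iSup_le fun μ => ?_
    by_cases hμ : HasEigenvalue T μ
    · exact le_iSup (fun ν : s => eigenspace T ν) ⟨μ, hs μ hμ⟩
    · simp [hasEigenvalue_iff.not_left.1 hμ]
  rw [← s.sum_coe_sort]
  exact (hT.orthogonalFamily_eigenspaces.comp Subtype.coe_injective).sum_projection_of_mem_iSup
    x (hsup ▸ Submodule.mem_top)

theorem pow_apply_eq_sum (hT : T.IsSymmetric) (hs : ∀ μ, HasEigenvalue T μ → μ ∈ s)
    (x : E) (ℓ : ℕ) :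
    (T ^ ℓ) x = ∑ μ ∈ s, μ ^ ℓ • (eigenspace T μ).starProjection x := by
  conv_lhs => rw [← hT.sum_starProjection_eigenspace hs x, map_sum]
  refine sum_congr rfl fun μ _ => ?_
  by_cases h0 : (eigenspace T μ).starProjection x = 0
  · simp [h0]
  · exact (hasEigenvector_iff.2 ⟨Submodule.starProjection_apply_mem _ x, h0⟩).pow_apply ℓ

theorem inner_pow_apply_eq_sum (hT : T.IsSymmetric) (hs : ∀ μ, HasEigenvalue T μ → μ ∈ s)
    (x : E) (ℓ : ℕ) :
    inner 𝕜 x ((T ^ ℓ) x) =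
      ∑ μ ∈ s, μ ^ ℓ * (‖(eigenspace T μ).orthogonalProjectionOnto x‖ ^ 2 : ℝ) := by
  simp only [hT.pow_apply_eq_sum hs, inner_sum, inner_smul_right,
    Submodule.inner_starProjection_self_eq_norm_sq]

end LinearMap.IsSymmetric

namespace Matrix

variable {ι : Type*} [Fintype ι] [DecidableEq ι]

theorem ker_toEuclideanLin_sub_smul_one {𝕜 : Type*} [RCLike 𝕜] (A : Matrix ι ι 𝕜) (μ : 𝕜) :
    LinearMap.ker (toEuclideanLin (A - μ • 1)) = eigenspace (toEuclideanLin A) μ := by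
  rw [eigenspace_def, map_sub, map_smul, toLpLin_one, Module.End.one_eq_id]

theorem dotProduct_pow_mulVec_eq_inner (A : Matrix ι ι ℝ) (x : EuclideanSpace ℝ ι) (ℓ : ℕ) :
    x.ofLp ⬝ᵥ ((A ^ ℓ) *ᵥ x.ofLp) = ⟪x, (toEuclideanLin A ^ ℓ) x⟫ := by
  rw [← toLpLin_pow, toLpLin_apply, EuclideanSpace.inner_eq_star_dotProduct, star_trivial,
    dotProduct_comm]

theorem IsHermitian.dotProduct_pow_mulVec_eq_sum {A : Matrix ι ι ℝ} (hA : A.IsHermitian)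
    {s : Finset ℝ} (hs : ∀ μ, HasEigenvalue (toEuclideanLin A) μ → μ ∈ s)
    (x : EuclideanSpace ℝ ι) (ℓ : ℕ) :
    x.ofLp ⬝ᵥ ((A ^ ℓ) *ᵥ x.ofLp) = ∑ μ ∈ s,
      μ ^ ℓ * ‖(LinearMap.ker (toEuclideanLin (A - μ • 1))).orthogonalProjectionOnto x‖ ^ 2 := by
  rw [dotProduct_pow_mulVec_eq_inner,
    (isSymmetric_toEuclideanLin_iff.2 hA).inner_pow_apply_eq_sum hs]
  refine sum_congr rfl fun μ _ => ?_
  rw [ker_toEuclideanLin_sub_smul_one]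
  rfl

end Matrix

theorem stmt5 (n m : ℕ) (A : Matrix (Fin n) (Fin n) ℝ) (B : Matrix (Fin m) (Fin m) ℝ)
    (hA : A.IsSymm) (hB : B.IsSymm)
    (h : ∀ ℓ : ℕ,
      (fun _ => (1 : ℝ)) ⬝ᵥ ((A ^ ℓ) *ᵥ (fun _ => 1)) =
      (fun _ => (1 : ℝ)) ⬝ᵥ ((B ^ ℓ) *ᵥ (fun _ => 1))) :
    ∀ μ : ℝ,
      ‖Submodule.orthogonalProjectionOnto (LinearMap.ker (Matrix.toEuclideanLin (A - μ • 1)))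
          ((WithLp.toLp 2 (fun _ => 1) : EuclideanSpace ℝ (Fin n)))‖ =
      ‖Submodule.orthogonalProjectionOnto (LinearMap.ker (Matrix.toEuclideanLin (B - μ • 1)))
          ((WithLp.toLp 2 (fun _ => 1) : EuclideanSpace ℝ (Fin m)))‖ := by
  intro μ
  have hA' : A.IsHermitian := isHermitian_iff_isSymm.2 hA
  have hB' : B.IsHermitian := isHermitian_iff_isSymm.2 hB
  set s := insert μ ((finite_hasEigenvalue (toEuclideanLin A)).toFinset ∪
    (finite_hasEigenvalue (toEuclideanLin B)).toFinset)
  have hsA : ∀ ν, HasEigenvalue (toEuclideanLin A) ν → ν ∈ s := by simp +contextual [s]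
  have hsB : ∀ ν, HasEigenvalue (toEuclideanLin B) ν → ν ∈ s := by simp +contextual [s]
  have hmoments (ℓ : ℕ) :=
    ((hA'.dotProduct_pow_mulVec_eq_sum hsA (WithLp.toLp 2 1) ℓ).symm.trans (h ℓ)).trans
      (hB'.dotProduct_pow_mulVec_eq_sum hsB (WithLp.toLp 2 1) ℓ)
  exact (pow_left_inj₀ (norm_nonneg _) (norm_nonneg _) two_ne_zero).1
    (eq_of_forall_sum_pow_mul_eq hmoments (mem_insert_self μ _))
end

section
/- Let k ≥ 2 be an integer and let G and H be finite simple graphs. If the system L^{k+1}_iso(G,H) has a real solution, then hom(F,G) = hom(F,H) holds for every finite simple graph F of pathwidth at most k. -/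
/-- `π ⊆ V × W` is a partial isomorphism from `G` to `H`. -/
def IsPartialIso {V W : Type*} (G : SimpleGraph V) (H : SimpleGraph W)
    (π : Finset (V × W)) : Prop :=
  ∀ p ∈ π, ∀ q ∈ π, (p.1 = q.1 ↔ p.2 = q.2) ∧ (G.Adj p.1 q.1 ↔ H.Adj p.2 q.2)

/-- `X` is a solution of the system `L^K_iso(G,H)`. -/
def IsLisoSolution {V W : Type*} [Fintype V] [Fintype W] [DecidableEq V] [DecidableEq W]
    (K : ℕ) (G : SimpleGraph V) (H : SimpleGraph W) (X : Finset (V × W) → ℝ) : Prop :=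
  (∀ π : Finset (V × W), π.card + 1 ≤ K → ∀ w : W,
      ∑ v : V, X (insert (v, w) π) = X π) ∧
  (∀ π : Finset (V × W), π.card + 1 ≤ K → ∀ v : V,
      ∑ w : W, X (insert (v, w) π) = X π) ∧
  (∀ π : Finset (V × W), π.card ≤ K → ¬ IsPartialIso G H π → X π = 0) ∧
  X ∅ = 1

/-- `bag : Fin r → Finset α` is a path decomposition of `F`. -/
def IsPathDecomp {α : Type*} (F : SimpleGraph α) {r : ℕ} (bag : Fin r → Finset α) : Prop :=
  (∀ v : α, ∃ i, v ∈ bag i) ∧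
  (∀ u v : α, F.Adj u v → ∃ i, u ∈ bag i ∧ v ∈ bag i) ∧
  (∀ (v : α) (i j l : Fin r), i ≤ j → j ≤ l → v ∈ bag i → v ∈ bag l → v ∈ bag j)

/-- `F` has pathwidth at most `k`. -/
def pathwidthLE {α : Type*} (F : SimpleGraph α) (k : ℕ) : Prop :=
  ∃ (r : ℕ) (bag : Fin r → Finset α),
    IsPathDecomp F bag ∧ ∀ i, (bag i).card ≤ k + 1


open Finset

section Aux

open scoped Classical

variable {p k : ℕ} {V : Type*} {W : Type*} [Fintype V] [DecidableEq V]
  [Fintype W] [DecidableEq W]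

/-- Partial homomorphism on `S` with default value `d` outside `S`. -/
def okFun {α V' : Type*} (F : SimpleGraph α) (G : SimpleGraph V') (S : Finset α)
    (d : V') (f : α → V') : Prop :=
  (∀ u v, F.Adj u v → u ∈ S → v ∈ S → G.Adj (f u) (f v)) ∧ ∀ x ∉ S, f x = d

lemma step1 (X : Finset (V × W) → ℝ)
    (hL1 : ∀ π : Finset (V × W), π.card ≤ k → ∀ w : W, ∑ v : V, X (insert (v, w) π) = X π)
    (u : Fin p) (B : Finset (Fin p)) (hu : u ∈ B) (hB : B.card ≤ k + 1)
    (f : Fin p → V) (g : Fin p → W) :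
    ∑ v : V, X (B.image fun x => (Function.update f u v x, g x))
      = X ((B.erase u).image fun x => (f x, g x)) := by
  have h0 : ∀ v : V, B.image (fun x => (Function.update f u v x, g x))
      = insert (v, g u) ((B.erase u).image fun x => (f x, g x)) := by
    intro v
    conv_lhs => rw [← Finset.insert_erase hu]
    rw [Finset.image_insert]
    congr 1
    · simp
    · apply Finset.image_congr
      intro x hx
      have hne : x ≠ u := (Finset.mem_erase.mp hx).1
      simp [Function.update_of_ne hne]
  have hcard : ((B.erase u).image fun x => (f x, g x)).card ≤ k := by
    calc ((B.erase u).image fun x => (f x, g x)).card ≤ (B.erase u).card :=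
          Finset.card_image_le
      _ = B.card - 1 := Finset.card_erase_of_mem hu
      _ ≤ k := by omega
  calc ∑ v : V, X (B.image fun x => (Function.update f u v x, g x))
      = ∑ v : V, X (insert (v, g u) ((B.erase u).image fun x => (f x, g x))) := by
        exact Finset.sum_congr rfl fun v _ => by rw [h0 v]
    _ = _ := hL1 _ hcard (g u)

lemma sumExt (X : Finset (V × W) → ℝ)
    (hL1 : ∀ π : Finset (V × W), π.card ≤ k → ∀ w : W, ∑ v : V, X (insert (v, w) π) = X π)
    (g : Fin p → W) (f : Fin p → V) :
    ∀ (D B : Finset (Fin p)), D ⊆ B → B.card ≤ k + 1 →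
    ∑ f' ∈ Finset.univ.filter (fun f' : Fin p → V => ∀ x ∉ D, f' x = f x),
        X (B.image fun x => (f' x, g x))
      = X ((B \ D).image fun x => (f x, g x)) := by
  intro D
  induction D using Finset.induction_on with
  | empty =>
      intro B _ _
      have h1 : Finset.univ.filter (fun f' : Fin p → V => ∀ x ∉ (∅ : Finset (Fin p)), f' x = f x)
          = {f} := by
        ext f'
        simp [funext_iff]
      rw [h1, Finset.sum_singleton, Finset.sdiff_empty]
  | @insert u D' hu ih =>
      intro B hsub hB
      have huB : u ∈ B := hsub (Finset.mem_insert_self u D')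
      have hD'B : D' ⊆ B.erase u := by
        intro x hx
        exact Finset.mem_erase.mpr ⟨fun h => hu (h ▸ hx), hsub (Finset.mem_insert_of_mem hx)⟩
      have hbij : ∑ f' ∈ Finset.univ.filter
            (fun f' : Fin p → V => ∀ x ∉ insert u D', f' x = f x),
            X (B.image fun x => (f' x, g x))
          = ∑ q ∈ (Finset.univ : Finset V) ×ˢ
              (Finset.univ.filter (fun f'' : Fin p → V => ∀ x ∉ D', f'' x = f x)),
              X (B.image fun x => (Function.update q.2 u q.1 x, g x)) := by
        refine Finset.sum_nbij' (i := fun f' => (f' u, Function.update f' u (f u)))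
          (j := fun q => Function.update q.2 u q.1) ?_ ?_ ?_ ?_ ?_
        · intro f' hf'
          simp only [Finset.mem_filter, Finset.mem_univ, true_and] at hf' ⊢
          refine Finset.mem_product.mpr ⟨Finset.mem_univ _, ?_⟩
          simp only [Finset.mem_filter, Finset.mem_univ, true_and]
          intro x hx
          by_cases hxu : x = u
          · subst hxu; simp
          · rw [Function.update_of_ne hxu]
            exact hf' x (by simp [hxu, hx])
        · intro q hq
          simp only [Finset.mem_product, Finset.mem_filter, Finset.mem_univ, true_and] at hq
          simp only [Finset.mem_filter, Finset.mem_univ, true_and]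
          intro x hx
          have hxu : x ≠ u := fun h => hx (h ▸ Finset.mem_insert_self u D')
          rw [Function.update_of_ne hxu]
          exact hq x (fun h => hx (Finset.mem_insert_of_mem h))
        · intro f' hf'
          funext x
          by_cases hx : x = u <;> simp [hx]
        · intro q hq
          simp only [Finset.mem_product, Finset.mem_filter, Finset.mem_univ, true_and] at hq
          have h1 : q.2 u = f u := hq u hu
          have h2 : Function.update (Function.update q.2 u q.1) u (f u) = q.2 := by
            rw [Function.update_idem, ← h1, Function.update_eq_self]
          simp [h2]
        · intro f' hf'
          congr 1
          apply Finset.image_congr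
          intro x hx
          simp [Function.update_idem, Function.update_eq_self]
      rw [hbij, Finset.sum_product, Finset.sum_comm]
      have hstep : ∀ f'' : Fin p → V,
          ∑ v : V, X (B.image fun x => (Function.update f'' u v x, g x))
            = X ((B.erase u).image fun x => (f'' x, g x)) :=
        fun f'' => step1 X hL1 u B huB hB f'' g
      calc ∑ f'' ∈ Finset.univ.filter (fun f'' : Fin p → V => ∀ x ∉ D', f'' x = f x),
            ∑ v : V, X (B.image fun x => (Function.update f'' u v x, g x))
          = ∑ f'' ∈ Finset.univ.filter (fun f'' : Fin p → V => ∀ x ∉ D', f'' x = f x),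
            X ((B.erase u).image fun x => (f'' x, g x)) :=
            Finset.sum_congr rfl fun f'' _ => hstep f''
        _ = X ((B.erase u \ D').image fun x => (f x, g x)) :=
            ih (B.erase u) hD'B (le_trans (Finset.card_erase_le) hB)
        _ = X ((B \ insert u D').image fun x => (f x, g x)) := by
            have hset : B.erase u \ D' = B \ insert u D' := by
              ext x
              simp only [Finset.mem_sdiff, Finset.mem_erase, Finset.mem_insert, not_or]
              tauto
            rw [hset]


lemma master (F : SimpleGraph (Fin p)) (G : SimpleGraph V) (H : SimpleGraph W)
    (X : Finset (V × W) → ℝ)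
    (hL1 : ∀ π : Finset (V × W), π.card ≤ k → ∀ w : W, ∑ v : V, X (insert (v, w) π) = X π)
    (hL3 : ∀ (π : Finset (V × W)) (a b : V) (c d : W), π.card ≤ k + 1 →
      (a, c) ∈ π → (b, d) ∈ π → ¬ G.Adj a b → H.Adj c d → X π = 0)
    (dV : V) (A B : Finset (Fin p)) (hB : B.card ≤ k + 1)
    (hedge : ∀ u v, F.Adj u v → u ∈ A ∪ B → v ∈ A ∪ B → (u ∈ A ∧ v ∈ A) ∨ (u ∈ B ∧ v ∈ B))
    (g : Fin p → W) (hg : ∀ u v, F.Adj u v → u ∈ B → v ∈ B → H.Adj (g u) (g v)) :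
    ∑ f : Fin p → V, (if okFun F G A dV f then (1:ℝ) else 0)
        * X ((B ∩ A).image fun x => (f x, g x))
      = ∑ f : Fin p → V, (if okFun F G (A ∪ B) dV f then (1:ℝ) else 0)
        * X (B.image fun x => (f x, g x)) := by
  classical
  set D : Finset (Fin p) := B \ A with hD
  have hDA : ∀ x, x ∈ A → x ∉ D := fun x hx hxD => (Finset.mem_sdiff.mp hxD).2 hx
  set φ : (Fin p → V) → (Fin p → V) := fun f' x => if x ∈ D then dV else f' x with hφ
  -- fiber decomposition of the RHS
  have hfib : ∑ f : Fin p → V, ∑ f' ∈ Finset.univ.filter (fun f' : Fin p → V => φ f' = f),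
        (if okFun F G (A ∪ B) dV f' then (1:ℝ) else 0) * X (B.image fun x => (f' x, g x))
      = ∑ f' : Fin p → V, (if okFun F G (A ∪ B) dV f' then (1:ℝ) else 0)
          * X (B.image fun x => (f' x, g x)) :=
    Finset.sum_fiberwise_of_maps_to (fun x _ => Finset.mem_univ (φ x)) _
  rw [← hfib]
  refine Finset.sum_congr rfl fun f _ => ?_
  have hok : ∀ f' : Fin p → V, okFun F G (A ∪ B) dV f' → okFun F G A dV (φ f') := by
    intro f' h
    constructor
    · intro u v huv hu hv
      rw [hφ]
      simp only [hDA u hu, hDA v hv, if_neg, if_false]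
      exact h.1 u v huv (Finset.mem_union_left _ hu) (Finset.mem_union_left _ hv)
    · intro x hx
      rw [hφ]
      by_cases hxD : x ∈ D
      · simp [hxD]
      · simp only [hxD, if_false]
        refine h.2 x ?_
        intro hAB
        rcases Finset.mem_union.mp hAB with h1 | h1
        · exact hx h1
        · exact hxD (Finset.mem_sdiff.mpr ⟨h1, hx⟩)
  by_cases hA : okFun F G A dV f
  · -- main case
    have hfilter : Finset.univ.filter (fun f' : Fin p → V => φ f' = f)
        = Finset.univ.filter (fun f' : Fin p → V => ∀ x ∉ D, f' x = f x) := by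
      ext f'
      simp only [Finset.mem_filter, Finset.mem_univ, true_and]
      constructor
      · intro h x hx
        rw [← h, hφ]
        simp [hx]
      · intro h
        funext x
        by_cases hx : x ∈ D
        · have hxA : x ∉ A := (Finset.mem_sdiff.mp hx).2
          rw [hφ]
          simp only [hx, if_true]
          exact (hA.2 x hxA).symm
        · rw [hφ]
          simp only [hx, if_false]
          exact h x hx
    rw [hfilter]
    have hvan : ∑ f' ∈ Finset.univ.filter (fun f' : Fin p → V => ∀ x ∉ D, f' x = f x),
          (if okFun F G (A ∪ B) dV f' then (1:ℝ) else 0) * X (B.image fun x => (f' x, g x))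
        = ∑ f' ∈ Finset.univ.filter (fun f' : Fin p → V => ∀ x ∉ D, f' x = f x),
          X (B.image fun x => (f' x, g x)) := by
      refine Finset.sum_congr rfl fun f' hf' => ?_
      simp only [Finset.mem_filter, Finset.mem_univ, true_and] at hf'
      by_cases hokf' : okFun F G (A ∪ B) dV f'
      · rw [if_pos hokf', one_mul]
      · rw [if_neg hokf', zero_mul]
        -- show X vanishes
        have hsupp : ∀ x ∉ A ∪ B, f' x = dV := by
          intro x hx
          have hxA : x ∉ A := fun h => hx (Finset.mem_union_left _ h)
          have hxB : x ∉ B := fun h => hx (Finset.mem_union_right _ h)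
          have hxD : x ∉ D := fun h => hxB (Finset.mem_sdiff.mp h).1
          rw [hf' x hxD]
          exact hA.2 x hxA
        have hhom : ¬ (∀ u v, F.Adj u v → u ∈ A ∪ B → v ∈ A ∪ B → G.Adj (f' u) (f' v)) := by
          intro h
          exact hokf' ⟨h, hsupp⟩
        push_neg at hhom
        obtain ⟨u, v, huv, hu, hv, hnadj⟩ := hhom
        rcases hedge u v huv hu hv with ⟨huA, hvA⟩ | ⟨huB, hvB⟩
        · exfalso
          have h1 : f' u = f u := hf' u (hDA u huA)
          have h2 : f' v = f v := hf' v (hDA v hvA)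
          rw [h1, h2] at hnadj
          exact hnadj (hA.1 u v huv huA hvA)
        · refine (hL3 (B.image fun x => (f' x, g x)) (f' u) (f' v) (g u) (g v)
            (le_trans Finset.card_image_le hB) ?_ ?_ hnadj (hg u v huv huB hvB)).symm
          · exact Finset.mem_image.mpr ⟨u, huB, rfl⟩
          · exact Finset.mem_image.mpr ⟨v, hvB, rfl⟩
    rw [hvan, sumExt X hL1 g f D B (Finset.sdiff_subset) hB]
    rw [if_pos hA, one_mul]
    congr 2
    rw [hD, Finset.sdiff_sdiff_self_left]
  · -- degenerate case: indicator on the left is zero, fiber sum is zero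
    rw [if_neg hA, zero_mul]
    refine (Finset.sum_eq_zero fun f' hf' => ?_).symm
    simp only [Finset.mem_filter, Finset.mem_univ, true_and] at hf'
    have : ¬ okFun F G (A ∪ B) dV f' := fun h => hA (hf' ▸ hok f' h)
    rw [if_neg this, zero_mul]


variable {r : ℕ}

/-- Vertices appearing in bags with index `< i`. -/
def Apre (bag : Fin r → Finset (Fin p)) (i : ℕ) : Finset (Fin p) :=
  Finset.univ.filter fun v => ∃ j : Fin r, (j : ℕ) < i ∧ v ∈ bag j

/-- Vertices appearing in bags with index `≥ i`. -/
def Spost (bag : Fin r → Finset (Fin p)) (i : ℕ) : Finset (Fin p) :=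
  Finset.univ.filter fun v => ∃ j : Fin r, i ≤ (j : ℕ) ∧ v ∈ bag j

lemma Apre_zero (bag : Fin r → Finset (Fin p)) : Apre bag 0 = ∅ := by
  ext v; simp [Apre]

lemma Spost_last (bag : Fin r → Finset (Fin p)) : Spost bag r = ∅ := by
  ext v
  simp only [Spost, Finset.mem_filter, Finset.mem_univ, true_and, Finset.notMem_empty, iff_false]
  rintro ⟨j, hj, -⟩
  exact absurd j.2 (by omega)

lemma Apre_last (bag : Fin r → Finset (Fin p)) (hcov : ∀ v, ∃ i, v ∈ bag i) :
    Apre bag r = Finset.univ := by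
  ext v
  simp only [Apre, Finset.mem_filter, Finset.mem_univ, true_and, iff_true]
  obtain ⟨j, hj⟩ := hcov v
  exact ⟨j, j.2, hj⟩

lemma Spost_zero (bag : Fin r → Finset (Fin p)) (hcov : ∀ v, ∃ i, v ∈ bag i) :
    Spost bag 0 = Finset.univ := by
  ext v
  simp only [Spost, Finset.mem_filter, Finset.mem_univ, true_and, iff_true]
  obtain ⟨j, hj⟩ := hcov v
  exact ⟨j, Nat.zero_le _, hj⟩

lemma Apre_succ (bag : Fin r → Finset (Fin p)) {i : ℕ} (hi : i < r) :
    Apre bag (i + 1) = Apre bag i ∪ bag ⟨i, hi⟩ := by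
  ext v
  simp only [Apre, Finset.mem_filter, Finset.mem_univ, true_and, Finset.mem_union]
  constructor
  · rintro ⟨j, hj, hv⟩
    rcases Nat.lt_succ_iff_lt_or_eq.mp hj with h | h
    · exact Or.inl ⟨j, h, hv⟩
    · refine Or.inr ?_
      have : j = ⟨i, hi⟩ := Fin.ext h
      rwa [this] at hv
  · rintro (⟨j, hj, hv⟩ | hv)
    · exact ⟨j, by omega, hv⟩
    · exact ⟨⟨i, hi⟩, by simp, hv⟩

lemma Spost_succ (bag : Fin r → Finset (Fin p)) {i : ℕ} (hi : i < r) :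
    Spost bag i = Spost bag (i + 1) ∪ bag ⟨i, hi⟩ := by
  ext v
  simp only [Spost, Finset.mem_filter, Finset.mem_univ, true_and, Finset.mem_union]
  constructor
  · rintro ⟨j, hj, hv⟩
    rcases Nat.lt_or_ge (i : ℕ) j with h | h
    · exact Or.inl ⟨j, by omega, hv⟩
    · refine Or.inr ?_
      have : j = ⟨i, hi⟩ := Fin.ext (show (j : ℕ) = i by omega)
      rwa [this] at hv
  · rintro (⟨j, hj, hv⟩ | hv)
    · exact ⟨j, by omega, hv⟩
    · exact ⟨⟨i, hi⟩, by simp, hv⟩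

lemma inter_left (bag : Fin r → Finset (Fin p))
    (hint : ∀ (v : Fin p) (a b c : Fin r), a ≤ b → b ≤ c → v ∈ bag a → v ∈ bag c → v ∈ bag b)
    {i : ℕ} (hi : i < r) :
    bag ⟨i, hi⟩ ∩ Apre bag i = Apre bag i ∩ Spost bag i := by
  ext v
  simp only [Finset.mem_inter, Apre, Spost, Finset.mem_filter, Finset.mem_univ, true_and]
  constructor
  · rintro ⟨hvb, hvA⟩
    exact ⟨hvA, ⟨⟨i, hi⟩, le_refl _, hvb⟩⟩
  · rintro ⟨⟨j, hj, hvj⟩, ⟨l, hl, hvl⟩⟩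
    refine ⟨hint v j ⟨i, hi⟩ l ?_ ?_ hvj hvl, ⟨j, hj, hvj⟩⟩
    · show (j : ℕ) ≤ i; omega
    · show (i : ℕ) ≤ l; omega

lemma inter_right (bag : Fin r → Finset (Fin p))
    (hint : ∀ (v : Fin p) (a b c : Fin r), a ≤ b → b ≤ c → v ∈ bag a → v ∈ bag c → v ∈ bag b)
    {i : ℕ} (hi : i < r) :
    bag ⟨i, hi⟩ ∩ Spost bag (i + 1) = Apre bag (i + 1) ∩ Spost bag (i + 1) := by
  ext v
  simp only [Finset.mem_inter, Apre, Spost, Finset.mem_filter, Finset.mem_univ, true_and]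
  constructor
  · rintro ⟨hvb, hvS⟩
    exact ⟨⟨⟨i, hi⟩, show i < i + 1 by omega, hvb⟩, hvS⟩
  · rintro ⟨⟨j, hj, hvj⟩, ⟨l, hl, hvl⟩⟩
    refine ⟨hint v j ⟨i, hi⟩ l ?_ ?_ hvj hvl, ⟨l, hl, hvl⟩⟩
    · show (j : ℕ) ≤ i; omega
    · show (i : ℕ) ≤ l; omega


lemma hedge_left (F : SimpleGraph (Fin p)) (bag : Fin r → Finset (Fin p))
    (hbagedge : ∀ u v, F.Adj u v → ∃ m, u ∈ bag m ∧ v ∈ bag m)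
    (hint : ∀ (v : Fin p) (a b c : Fin r), a ≤ b → b ≤ c → v ∈ bag a → v ∈ bag c → v ∈ bag b)
    {i : ℕ} (hi : i < r) :
    ∀ u v, F.Adj u v → u ∈ Apre bag i ∪ bag ⟨i, hi⟩ → v ∈ Apre bag i ∪ bag ⟨i, hi⟩ →
      (u ∈ Apre bag i ∧ v ∈ Apre bag i) ∨ (u ∈ bag ⟨i, hi⟩ ∧ v ∈ bag ⟨i, hi⟩) := by
  have key : ∀ u v, F.Adj u v → u ∈ Apre bag i ∪ bag ⟨i, hi⟩ → v ∈ Apre bag i ∪ bag ⟨i, hi⟩ →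
      v ∉ Apre bag i → (u ∈ bag ⟨i, hi⟩ ∧ v ∈ bag ⟨i, hi⟩) := by
    intro u v huv hu hv hvA
    have hvB : v ∈ bag ⟨i, hi⟩ := (Finset.mem_union.mp hv).resolve_left hvA
    obtain ⟨m, hum, hvm⟩ := hbagedge u v huv
    have hmi : (i : ℕ) ≤ m := by
      by_contra hc
      exact hvA (Finset.mem_filter.mpr ⟨Finset.mem_univ v, ⟨m, by omega, hvm⟩⟩)
    rcases Finset.mem_union.mp hu with huA | huB
    · obtain ⟨j, hj, huj⟩ := Finset.mem_filter.mp huA |>.2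
      exact ⟨hint u j ⟨i, hi⟩ m (show (j : ℕ) ≤ i by omega) (show (i : ℕ) ≤ m from hmi)
        huj hum, hvB⟩
    · exact ⟨huB, hvB⟩
  intro u v huv hu hv
  by_cases hvA : v ∈ Apre bag i
  · by_cases huA : u ∈ Apre bag i
    · exact Or.inl ⟨huA, hvA⟩
    · have := key v u huv.symm hv hu huA
      exact Or.inr ⟨this.2, this.1⟩
  · exact Or.inr (key u v huv hu hv hvA)

lemma hedge_right (F : SimpleGraph (Fin p)) (bag : Fin r → Finset (Fin p))
    (hbagedge : ∀ u v, F.Adj u v → ∃ m, u ∈ bag m ∧ v ∈ bag m)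
    (hint : ∀ (v : Fin p) (a b c : Fin r), a ≤ b → b ≤ c → v ∈ bag a → v ∈ bag c → v ∈ bag b)
    {i : ℕ} (hi : i < r) :
    ∀ u v, F.Adj u v → u ∈ Spost bag (i + 1) ∪ bag ⟨i, hi⟩ → v ∈ Spost bag (i + 1) ∪ bag ⟨i, hi⟩ →
      (u ∈ Spost bag (i + 1) ∧ v ∈ Spost bag (i + 1)) ∨ (u ∈ bag ⟨i, hi⟩ ∧ v ∈ bag ⟨i, hi⟩) := by
  have key : ∀ u v, F.Adj u v → u ∈ Spost bag (i + 1) ∪ bag ⟨i, hi⟩ →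
      v ∈ Spost bag (i + 1) ∪ bag ⟨i, hi⟩ → v ∉ Spost bag (i + 1) →
      (u ∈ bag ⟨i, hi⟩ ∧ v ∈ bag ⟨i, hi⟩) := by
    intro u v huv hu hv hvS
    have hvB : v ∈ bag ⟨i, hi⟩ := (Finset.mem_union.mp hv).resolve_left hvS
    obtain ⟨m, hum, hvm⟩ := hbagedge u v huv
    have hmi : (m : ℕ) ≤ i := by
      by_contra hc
      exact hvS (Finset.mem_filter.mpr ⟨Finset.mem_univ v, ⟨m, by omega, hvm⟩⟩)
    rcases Finset.mem_union.mp hu with huS | huB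
    · obtain ⟨l, hl, hul⟩ := Finset.mem_filter.mp huS |>.2
      exact ⟨hint u m ⟨i, hi⟩ l (show (m : ℕ) ≤ i from hmi) (show (i : ℕ) ≤ l by omega)
        hum hul, hvB⟩
    · exact ⟨huB, hvB⟩
  intro u v huv hu hv
  by_cases hvS : v ∈ Spost bag (i + 1)
  · by_cases huS : u ∈ Spost bag (i + 1)
    · exact Or.inl ⟨huS, hvS⟩
    · have := key v u huv.symm hv hu huS
      exact Or.inr ⟨this.2, this.1⟩
  · exact Or.inr (key u v huv hu hv hvS)


lemma homCount_cast (F : SimpleGraph (Fin p)) (G : SimpleGraph V) :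
    (homCount F G : ℝ)
      = ∑ f : Fin p → V, (if (∀ u v, F.Adj u v → G.Adj (f u) (f v)) then (1:ℝ) else 0) := by
  classical
  have e : (F →g G) ≃ {f : Fin p → V // ∀ u v, F.Adj u v → G.Adj (f u) (f v)} :=
    { toFun := fun h => ⟨h, fun u v huv => h.map_rel huv⟩
      invFun := fun f => ⟨f.1, fun {u v} huv => f.2 u v huv⟩
      left_inv := fun h => rfl
      right_inv := fun f => rfl }
  have h1 : homCount F G
      = (Finset.univ.filter (fun f : Fin p → V => ∀ u v, F.Adj u v → G.Adj (f u) (f v))).card := by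
    rw [homCount, Nat.card_congr e, Nat.card_eq_fintype_card, Fintype.card_subtype]
  rw [h1, Finset.sum_boole]

/-- The hybrid quantity. -/
noncomputable def Tval (F : SimpleGraph (Fin p)) (G : SimpleGraph V) (H : SimpleGraph W)
    (X : Finset (V × W) → ℝ) (dV : V) (dW : W) (A S : Finset (Fin p)) : ℝ :=
  ∑ f : Fin p → V, ∑ g : Fin p → W,
    (if okFun F G A dV f then (1:ℝ) else 0) *
      ((if okFun F H S dW g then (1:ℝ) else 0) * X ((A ∩ S).image fun x => (f x, g x)))

lemma Tval_left (F : SimpleGraph (Fin p)) (G : SimpleGraph V) (H : SimpleGraph W)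
    (X : Finset (V × W) → ℝ) (hX4 : X ∅ = 1) (dV : V) (dW : W) :
    Tval F G H X dV dW ∅ Finset.univ = (homCount F H : ℝ) := by
  rw [homCount_cast F H]
  rw [Tval, Finset.sum_eq_single (fun _ : Fin p => dV)]
  · have hok : okFun F G ∅ dV (fun _ => dV) :=
      ⟨fun u v _ h => absurd h (Finset.notMem_empty u), fun x _ => rfl⟩
    rw [if_pos hok]
    refine Finset.sum_congr rfl fun g _ => ?_
    rw [Finset.empty_inter, Finset.image_empty, hX4, one_mul, mul_one]
    refine if_congr ?_ rfl rfl
    constructor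
    · intro h u v huv
      exact h.1 u v huv (Finset.mem_univ u) (Finset.mem_univ v)
    · intro h
      exact ⟨fun u v huv _ _ => h u v huv, fun x hx => absurd (Finset.mem_univ x) hx⟩
  · intro f _ hne
    have : ¬ okFun F G ∅ dV f := fun h => hne (funext fun x => h.2 x (Finset.notMem_empty x))
    rw [if_neg this]
    simp
  · intro h
    exact absurd (Finset.mem_univ _) h

lemma Tval_right (F : SimpleGraph (Fin p)) (G : SimpleGraph V) (H : SimpleGraph W)
    (X : Finset (V × W) → ℝ) (hX4 : X ∅ = 1) (dV : V) (dW : W) :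
    Tval F G H X dV dW Finset.univ ∅ = (homCount F G : ℝ) := by
  rw [homCount_cast F G]
  rw [Tval]
  refine Finset.sum_congr rfl fun f _ => ?_
  have hinner : ∑ g : Fin p → W,
      (if okFun F H ∅ dW g then (1:ℝ) else 0)
        * X ((Finset.univ ∩ ∅).image fun x => (f x, g x)) = 1 := by
    rw [Finset.sum_eq_single (fun _ : Fin p => dW)]
    · have hok : okFun F H ∅ dW (fun _ => dW) :=
        ⟨fun u v _ h => absurd h (Finset.notMem_empty u), fun x _ => rfl⟩
      rw [if_pos hok, Finset.univ_inter, Finset.image_empty, hX4, one_mul]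
    · intro g _ hne
      have : ¬ okFun F H ∅ dW g := fun h => hne (funext fun x => h.2 x (Finset.notMem_empty x))
      rw [if_neg this, zero_mul]
    · intro h
      exact absurd (Finset.mem_univ _) h
  rw [← Finset.mul_sum] at *
  rw [hinner, mul_one]
  refine if_congr ?_ rfl rfl
  constructor
  · intro h u v huv
    exact h.1 u v huv (Finset.mem_univ u) (Finset.mem_univ v)
  · intro h
    exact ⟨fun u v huv _ _ => h u v huv, fun x hx => absurd (Finset.mem_univ x) hx⟩

lemma master_swapped (F : SimpleGraph (Fin p)) (G : SimpleGraph V) (H : SimpleGraph W)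
    (X : Finset (V × W) → ℝ)
    (hL2 : ∀ π : Finset (V × W), π.card ≤ k → ∀ v : V, ∑ w : W, X (insert (v, w) π) = X π)
    (hL3b : ∀ (π : Finset (V × W)) (a b : V) (c d : W), π.card ≤ k + 1 →
      (a, c) ∈ π → (b, d) ∈ π → G.Adj a b → ¬ H.Adj c d → X π = 0)
    (dW : W) (A B : Finset (Fin p)) (hB : B.card ≤ k + 1)
    (hedge : ∀ u v, F.Adj u v → u ∈ A ∪ B → v ∈ A ∪ B → (u ∈ A ∧ v ∈ A) ∨ (u ∈ B ∧ v ∈ B))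
    (f : Fin p → V) (hf : ∀ u v, F.Adj u v → u ∈ B → v ∈ B → G.Adj (f u) (f v)) :
    ∑ g : Fin p → W, (if okFun F H A dW g then (1:ℝ) else 0)
        * X ((B ∩ A).image fun x => (f x, g x))
      = ∑ g : Fin p → W, (if okFun F H (A ∪ B) dW g then (1:ℝ) else 0)
        * X (B.image fun x => (f x, g x)) := by
  classical
  set X' : Finset (W × V) → ℝ := fun π => X (π.image Prod.swap) with hX'
  have himg : ∀ (C : Finset (Fin p)) (g : Fin p → W),
      X' (C.image fun x => (g x, f x)) = X (C.image fun x => (f x, g x)) := by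
    intro C g
    show X ((C.image fun x => (g x, f x)).image Prod.swap) = _
    rw [Finset.image_image]
    rfl
  have hL1' : ∀ π : Finset (W × V), π.card ≤ k → ∀ v : V,
      ∑ w : W, X' (insert (w, v) π) = X' π := by
    intro π hπ v
    have hcard : (π.image Prod.swap).card ≤ k := by
      rw [Finset.card_image_of_injective _ Prod.swap_injective]
      exact hπ
    have := hL2 (π.image Prod.swap) hcard v
    rw [hX']
    simp only
    calc ∑ w : W, X ((insert (w, v) π).image Prod.swap)
        = ∑ w : W, X (insert (v, w) (π.image Prod.swap)) := by
          refine Finset.sum_congr rfl fun w _ => ?_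
          rw [Finset.image_insert]
          rfl
      _ = X (π.image Prod.swap) := this
  have hL3' : ∀ (π : Finset (W × V)) (a b : W) (c d : V), π.card ≤ k + 1 →
      (a, c) ∈ π → (b, d) ∈ π → ¬ H.Adj a b → G.Adj c d → X' π = 0 := by
    intro π a b c d hπ h1 h2 hn hadj
    rw [hX']
    refine hL3b (π.image Prod.swap) c d a b ?_ ?_ ?_ hadj hn
    · rw [Finset.card_image_of_injective _ Prod.swap_injective]; exact hπ
    · exact Finset.mem_image.mpr ⟨(a, c), h1, rfl⟩
    · exact Finset.mem_image.mpr ⟨(b, d), h2, rfl⟩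
  have := master F H G X' hL1' hL3' dW A B hB hedge f hf
  calc ∑ g : Fin p → W, (if okFun F H A dW g then (1:ℝ) else 0)
        * X ((B ∩ A).image fun x => (f x, g x))
      = ∑ g : Fin p → W, (if okFun F H A dW g then (1:ℝ) else 0)
        * X' ((B ∩ A).image fun x => (g x, f x)) := by
        refine Finset.sum_congr rfl fun g _ => ?_
        rw [himg]
    _ = ∑ g : Fin p → W, (if okFun F H (A ∪ B) dW g then (1:ℝ) else 0)
        * X' (B.image fun x => (g x, f x)) := this
    _ = _ := by
        refine Finset.sum_congr rfl fun g _ => ?_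
        rw [himg]

end Aux

theorem stmt9 (k : ℕ) (hk : 2 ≤ k) {V W : Type*} [Fintype V] [Fintype W]
    [DecidableEq V] [DecidableEq W]
    (G : SimpleGraph V) (H : SimpleGraph W)
    (hX : ∃ X : Finset (V × W) → ℝ, IsLisoSolution (k + 1) G H X) :
    ∀ (p : ℕ) (F : SimpleGraph (Fin p)), pathwidthLE F k →
      homCount F G = homCount F H := by
  classical
  obtain ⟨X, hL1s, hL2s, hL3s, hX4⟩ := hX
  intro p F hF
  rcases isEmpty_or_nonempty V with hV | hV
  · rcases isEmpty_or_nonempty W with hW | hW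
    · refine Nat.card_congr ?_
      exact
        { toFun := fun h => ⟨fun x => (Equiv.equivOfIsEmpty V W) (h x),
            fun {a b} hab => isEmptyElim (h a)⟩
          invFun := fun h => ⟨fun x => (Equiv.equivOfIsEmpty W V) (h x),
            fun {a b} hab => isEmptyElim (h a)⟩
          left_inv := fun h => DFunLike.ext _ _ fun x => isEmptyElim (h x)
          right_inv := fun h => DFunLike.ext _ _ fun x => isEmptyElim (h x) }
    · exfalso
      have h0 := hL1s ∅ (by simp) (Classical.arbitrary W)
      rw [Finset.univ_eq_empty, Finset.sum_empty, hX4] at h0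
      exact zero_ne_one h0
  · rcases isEmpty_or_nonempty W with hW | hW
    · exfalso
      have h0 := hL2s ∅ (by simp) (Classical.arbitrary V)
      rw [Finset.univ_eq_empty, Finset.sum_empty, hX4] at h0
      exact zero_ne_one h0
    · obtain ⟨r, bag, ⟨hcov, hbagedge, hint⟩, hwid⟩ := hF
      obtain ⟨dV⟩ := hV
      obtain ⟨dW⟩ := hW
      have hL1 : ∀ π : Finset (V × W), π.card ≤ k → ∀ w : W,
          ∑ v : V, X (insert (v, w) π) = X π := fun π h w => hL1s π (by omega) w
      have hL2 : ∀ π : Finset (V × W), π.card ≤ k → ∀ v : V,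
          ∑ w : W, X (insert (v, w) π) = X π := fun π h v => hL2s π (by omega) v
      have hL3a : ∀ (π : Finset (V × W)) (a b : V) (c d : W), π.card ≤ k + 1 →
          (a, c) ∈ π → (b, d) ∈ π → ¬ G.Adj a b → H.Adj c d → X π = 0 := by
        intro π a b c d hc h1 h2 hn hh
        refine hL3s π hc fun hiso => ?_
        exact hn (((hiso (a, c) h1 (b, d) h2).2).mpr hh)
      have hL3b : ∀ (π : Finset (V × W)) (a b : V) (c d : W), π.card ≤ k + 1 →
          (a, c) ∈ π → (b, d) ∈ π → G.Adj a b → ¬ H.Adj c d → X π = 0 := by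
        intro π a b c d hc h1 h2 hh hn
        refine hL3s π hc fun hiso => ?_
        exact hn (((hiso (a, c) h1 (b, d) h2).2).mp hh)
      have hstep : ∀ i (hi : i < r),
          Tval F G H X dV dW (Apre bag i) (Spost bag i)
            = Tval F G H X dV dW (Apre bag (i + 1)) (Spost bag (i + 1)) := by
        intro i hi
        have hBcard : (bag ⟨i, hi⟩).card ≤ k + 1 := hwid ⟨i, hi⟩
        have hA1 : Apre bag (i + 1) = Apre bag i ∪ bag ⟨i, hi⟩ := Apre_succ bag hi
        have hS1 : Spost bag i = Spost bag (i + 1) ∪ bag ⟨i, hi⟩ := Spost_succ bag hi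
        have hI1 : bag ⟨i, hi⟩ ∩ Apre bag i = Apre bag i ∩ Spost bag i :=
          inter_left bag hint hi
        have hI2 : bag ⟨i, hi⟩ ∩ Spost bag (i + 1) = Apre bag (i + 1) ∩ Spost bag (i + 1) :=
          inter_right bag hint hi
        have hE1 := hedge_left F bag hbagedge hint hi
        have hE2 := hedge_right F bag hbagedge hint hi
        have hBsubS : bag ⟨i, hi⟩ ⊆ Spost bag i := by
          rw [hS1]; exact Finset.subset_union_right
        have hBsubA : bag ⟨i, hi⟩ ⊆ Apre bag (i + 1) := by
          rw [hA1]; exact Finset.subset_union_right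
        have claim1 : Tval F G H X dV dW (Apre bag i) (Spost bag i)
            = ∑ f : Fin p → V, ∑ g : Fin p → W,
                (if okFun F G (Apre bag (i + 1)) dV f then (1:ℝ) else 0) *
                  ((if okFun F H (Spost bag i) dW g then (1:ℝ) else 0)
                    * X ((bag ⟨i, hi⟩).image fun x => (f x, g x))) := by
          simp only [Tval]
          rw [Finset.sum_comm]
          conv_rhs => rw [Finset.sum_comm]
          refine Finset.sum_congr rfl fun g _ => ?_
          by_cases hg : okFun F H (Spost bag i) dW g
          · simp only [if_pos hg, one_mul]
            have hgadj : ∀ u v, F.Adj u v → u ∈ bag ⟨i, hi⟩ → v ∈ bag ⟨i, hi⟩ →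
                H.Adj (g u) (g v) :=
              fun u v huv hu hv => hg.1 u v huv (hBsubS hu) (hBsubS hv)
            rw [← hI1, hA1]
            exact master F G H X hL1 hL3a dV (Apre bag i) (bag ⟨i, hi⟩) hBcard hE1 g hgadj
          · simp only [if_neg hg, zero_mul, mul_zero, Finset.sum_const_zero]
        have claim2 : (∑ f : Fin p → V, ∑ g : Fin p → W,
                (if okFun F G (Apre bag (i + 1)) dV f then (1:ℝ) else 0) *
                  ((if okFun F H (Spost bag i) dW g then (1:ℝ) else 0)
                    * X ((bag ⟨i, hi⟩).image fun x => (f x, g x))))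
            = Tval F G H X dV dW (Apre bag (i + 1)) (Spost bag (i + 1)) := by
          simp only [Tval]
          refine Finset.sum_congr rfl fun f _ => ?_
          by_cases hf : okFun F G (Apre bag (i + 1)) dV f
          · simp only [if_pos hf, one_mul]
            have hfadj : ∀ u v, F.Adj u v → u ∈ bag ⟨i, hi⟩ → v ∈ bag ⟨i, hi⟩ →
                G.Adj (f u) (f v) :=
              fun u v huv hu hv => hf.1 u v huv (hBsubA hu) (hBsubA hv)
            rw [← hI2, hS1]
            exact (master_swapped F G H X hL2 hL3b dW (Spost bag (i + 1)) (bag ⟨i, hi⟩)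
              hBcard hE2 f hfadj).symm
          · simp only [if_neg hf, zero_mul, Finset.sum_const_zero]
        exact claim1.trans claim2
      have hchain : ∀ i, i ≤ r →
          Tval F G H X dV dW (Apre bag i) (Spost bag i) = (homCount F H : ℝ) := by
        intro i
        induction i with
        | zero =>
            intro _
            rw [Apre_zero, Spost_zero bag hcov]
            exact Tval_left F G H X hX4 dV dW
        | succ n ihn =>
            intro hn
            rw [← hstep n (by omega)]
            exact ihn (by omega)
      have hfinal := hchain r le_rfl
      rw [Apre_last bag hcov, Spost_last bag, Tval_right F G H X hX4 dV dW] at hfinal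
      exact_mod_cast hfinal
end

section
/- Let k ≥ 2 be an integer and let G and H be finite simple graphs with vertex sets V and W and adjacency matrices A and B. If the real family (X_π), indexed by the sets π ⊆ V×W with |π| ≤ k+1, is a solution of L^{k+1}_iso(G,H), then for every π ⊆ V×W with |π| ≤ k−1 and all v ∈ V, w ∈ W it satisfies Σ_{v'∈V} A_{v v'}·X_{π∪{(v',w)}} = Σ_{w'∈W} X_{π∪{(v,w')}}·B_{w' w}. -/
open Matrix

theorem stmt12 (k : ℕ) (hk : 2 ≤ k) {V W : Type*} [Fintype V] [Fintype W]
    [DecidableEq V] [DecidableEq W]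
    (G : SimpleGraph V) (H : SimpleGraph W)
    [DecidableRel G.Adj] [DecidableRel H.Adj]
    (X : Finset (V × W) → ℝ) (hX : IsLisoSolution (k + 1) G H X) :
    ∀ π : Finset (V × W), π.card ≤ k - 1 → ∀ (v : V) (w : W),
      ∑ v' : V, (G.adjMatrix ℝ) v v' * X (insert (v', w) π) =
      ∑ w' : W, X (insert (v, w') π) * (H.adjMatrix ℝ) w' w := by
  obtain ⟨h1, h2, h3, _⟩ := hX
  intro π hπ v w
  have key : ∀ (v' : V) (w' : W),
      (G.adjMatrix ℝ) v v' * X (insert (v, w') (insert (v', w) π)) =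
      X (insert (v, w') (insert (v', w) π)) * (H.adjMatrix ℝ) w' w := by
    intro v' w'
    by_cases hz : X (insert (v, w') (insert (v', w) π)) = 0
    · simp [hz]
    · have hiso : IsPartialIso G H (insert (v, w') (insert (v', w) π)) := by
        by_contra hni
        exact hz (h3 _ (by
          calc (insert (v, w') (insert (v', w) π)).card
              ≤ (insert (v', w) π).card + 1 := Finset.card_insert_le _ _
            _ ≤ π.card + 2 := by have := Finset.card_insert_le (v', w) π; omega
            _ ≤ k + 1 := by omega) hni)
      have hmem1 : (v, w') ∈ insert (v, w') (insert (v', w) π) := Finset.mem_insert_self _ _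
      have hmem2 : (v', w) ∈ insert (v, w') (insert (v', w) π) :=
        Finset.mem_insert_of_mem (Finset.mem_insert_self _ _)
      have hadj := (hiso _ hmem1 _ hmem2).2
      by_cases hA : G.Adj v v'
      · simp [hA, hadj.mp hA, mul_comm]
      · have hB : ¬ H.Adj w' w := fun h => hA (hadj.mpr h)
        simp [hA, hB]
  calc ∑ v' : V, (G.adjMatrix ℝ) v v' * X (insert (v', w) π)
      = ∑ v' : V, ∑ w' : W, (G.adjMatrix ℝ) v v' * X (insert (v, w') (insert (v', w) π)) := by
        refine Finset.sum_congr rfl fun v' _ => ?_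
        rw [← Finset.mul_sum, h2 (insert (v', w) π) (by
          have := Finset.card_insert_le (v', w) π; omega) v]
    _ = ∑ w' : W, ∑ v' : V, X (insert (v, w') (insert (v', w) π)) * (H.adjMatrix ℝ) w' w := by
        rw [Finset.sum_comm]
        exact Finset.sum_congr rfl fun w' _ => Finset.sum_congr rfl fun v' _ => key v' w'
    _ = ∑ w' : W, X (insert (v, w') π) * (H.adjMatrix ℝ) w' w := by
        refine Finset.sum_congr rfl fun w' _ => ?_
        rw [← Finset.sum_mul]
        congr 1
        rw [← h1 (insert (v, w') π) (by
          have := Finset.card_insert_le (v, w') π; omega) w]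
        exact Finset.sum_congr rfl fun v' _ => by rw [Finset.insert_comm]
end

section
/- Let k ≥ 2 be an integer and let G and H be finite simple graphs with vertex sets V and W and adjacency matrices A and B. Suppose the real family (X_π), indexed by the sets π ⊆ V×W with |π| ≤ k+1, is entrywise nonnegative and satisfies: Σ_{v∈V} X_{π∪{(v,w)}} = X_π and Σ_{w∈W} X_{π∪{(v,w)}} = X_π for all π with |π| ≤ k and all w ∈ W, v ∈ V; Σ_{v'∈V} A_{v v'}·X_{π∪{(v',w)}} = Σ_{w'∈W} X_{π∪{(v,w')}}·B_{w' w} for all π with |π| ≤ k and all v ∈ V, w ∈ W; and X_∅ = 1. Then X_π = 0 holds for every π ⊆ V×W with |π| ≤ k+1 that is not a partial isomorphism from G to H; in particular (X_π) is a nonnegative solution of L^{k+1}_iso(G,H). -/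
open Matrix

theorem stmt13 (k : ℕ) (hk : 2 ≤ k) {V W : Type*} [Fintype V] [Fintype W]
    [DecidableEq V] [DecidableEq W]
    (G : SimpleGraph V) (H : SimpleGraph W)
    [DecidableRel G.Adj] [DecidableRel H.Adj]
    (X : Finset (V × W) → ℝ)
    (hnonneg : ∀ π, 0 ≤ X π)
    (hL1 : ∀ π : Finset (V × W), π.card ≤ k → ∀ w : W,
      ∑ v : V, X (insert (v, w) π) = X π)
    (hL2 : ∀ π : Finset (V × W), π.card ≤ k → ∀ v : V,
      ∑ w : W, X (insert (v, w) π) = X π)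
    (hF3 : ∀ π : Finset (V × W), π.card ≤ k → ∀ (v : V) (w : W),
      ∑ v' : V, (G.adjMatrix ℝ) v v' * X (insert (v', w) π) =
      ∑ w' : W, X (insert (v, w') π) * (H.adjMatrix ℝ) w' w)
    (hEmpty : X ∅ = 1) :
    (∀ π : Finset (V × W), π.card ≤ k + 1 → ¬ IsPartialIso G H π → X π = 0) ∧
    IsLisoSolution (k + 1) G H X := by
  classical
  have func1 : ∀ π : Finset (V × W), π.card ≤ k + 1 → ∀ v w w',
      (v, w) ∈ π → (v, w') ∈ π → w ≠ w' → X π = 0 := by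
    intro π hc v w w' hm hm' hne
    set σ := π.erase (v, w') with hσdef
    have hmσ : (v, w) ∈ σ := Finset.mem_erase.2 ⟨by simp [hne], hm⟩
    have hcσ : σ.card ≤ k := by
      rw [hσdef, Finset.card_erase_of_mem hm']
      omega
    have hsum := hL2 σ hcσ v
    rw [← Finset.add_sum_erase Finset.univ (fun w'' => X (insert (v, w'') σ))
      (Finset.mem_univ w)] at hsum
    rw [Finset.insert_eq_self.2 hmσ] at hsum
    have h0 : ∑ w'' ∈ Finset.univ.erase w, X (insert (v, w'') σ) = 0 := by linarith
    have hall := (Finset.sum_eq_zero_iff_of_nonneg (fun i _ => hnonneg _)).1 h0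
    have hw' : X (insert (v, w') σ) = 0 :=
      hall w' (Finset.mem_erase.2 ⟨fun h => hne h.symm, Finset.mem_univ _⟩)
    rwa [Finset.insert_erase hm'] at hw'
  have func2 : ∀ π : Finset (V × W), π.card ≤ k + 1 → ∀ v v' w,
      (v, w) ∈ π → (v', w) ∈ π → v ≠ v' → X π = 0 := by
    intro π hc v v' w hm hm' hne
    set σ := π.erase (v', w) with hσdef
    have hmσ : (v, w) ∈ σ := Finset.mem_erase.2 ⟨by simp [hne], hm⟩
    have hcσ : σ.card ≤ k := by
      rw [hσdef, Finset.card_erase_of_mem hm']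
      omega
    have hsum := hL1 σ hcσ w
    rw [← Finset.add_sum_erase Finset.univ (fun v'' => X (insert (v'', w) σ))
      (Finset.mem_univ v)] at hsum
    rw [Finset.insert_eq_self.2 hmσ] at hsum
    have h0 : ∑ v'' ∈ Finset.univ.erase v, X (insert (v'', w) σ) = 0 := by linarith
    have hall := (Finset.sum_eq_zero_iff_of_nonneg (fun i _ => hnonneg _)).1 h0
    have hv' : X (insert (v', w) σ) = 0 :=
      hall v' (Finset.mem_erase.2 ⟨fun h => hne h.symm, Finset.mem_univ _⟩)
    rwa [Finset.insert_erase hm'] at hv'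
  have adj1 : ∀ π : Finset (V × W), π.card ≤ k + 1 → ∀ v w v' w',
      (v, w) ∈ π → (v', w') ∈ π → v ≠ v' → w ≠ w' →
      G.Adj v v' → ¬ H.Adj w w' → X π = 0 := by
    intro π hc v w v' w' hm hm' hv hw hG hH
    set σ := π.erase (v', w') with hσdef
    have hmσ : (v, w) ∈ σ := Finset.mem_erase.2 ⟨by simp [hv], hm⟩
    have hcσ : σ.card ≤ k := by
      rw [hσdef, Finset.card_erase_of_mem hm']
      omega
    have hπeq : insert (v', w') σ = π := Finset.insert_erase hm'
    have hF := hF3 σ hcσ v' w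
    have hLHS : ∑ v'' : V, (G.adjMatrix ℝ) v' v'' * X (insert (v'', w) σ) = X σ := by
      rw [Finset.sum_eq_single v]
      · rw [Finset.insert_eq_self.2 hmσ]
        simp [SimpleGraph.adjMatrix_apply, hG.symm]
      · intro v'' _ hne
        have hcard : (insert (v'', w) σ).card ≤ k + 1 := by
          have := Finset.card_insert_le (v'', w) σ; omega
        have h0 : X (insert (v'', w) σ) = 0 :=
          func2 _ hcard v'' v w (Finset.mem_insert_self _ _)
            (Finset.mem_insert_of_mem hmσ) hne
        simp [h0]
      · simp
    have hL2σ := hL2 σ hcσ v'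
    rw [← Finset.add_sum_erase Finset.univ (fun w'' => X (insert (v', w'') σ))
      (Finset.mem_univ w')] at hL2σ
    have hRHS : ∑ w'' : W, X (insert (v', w'') σ) * (H.adjMatrix ℝ) w'' w ≤
        X σ - X (insert (v', w') σ) := by
      rw [← Finset.add_sum_erase Finset.univ
        (fun w'' => X (insert (v', w'') σ) * (H.adjMatrix ℝ) w'' w) (Finset.mem_univ w')]
      have hB : (H.adjMatrix ℝ) w' w = 0 := by
        simp only [SimpleGraph.adjMatrix_apply, ite_eq_right_iff]
        intro h; exact absurd h.symm hH
      rw [hB, mul_zero, zero_add]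
      calc ∑ w'' ∈ Finset.univ.erase w', X (insert (v', w'') σ) * (H.adjMatrix ℝ) w'' w
          ≤ ∑ w'' ∈ Finset.univ.erase w', X (insert (v', w'') σ) := by
            apply Finset.sum_le_sum
            intro i _
            apply mul_le_of_le_one_right (hnonneg _)
            simp only [SimpleGraph.adjMatrix_apply]
            split <;> norm_num
        _ = X σ - X (insert (v', w') σ) := by linarith
    rw [hLHS] at hF
    rw [hπeq] at hRHS
    have := hnonneg π
    linarith [hF ▸ hRHS]
  have adj2 : ∀ π : Finset (V × W), π.card ≤ k + 1 → ∀ v w v' w',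
      (v, w) ∈ π → (v', w') ∈ π → v ≠ v' → w ≠ w' →
      ¬ G.Adj v v' → H.Adj w w' → X π = 0 := by
    intro π hc v w v' w' hm hm' hv hw hG hH
    set σ := π.erase (v', w') with hσdef
    have hmσ : (v, w) ∈ σ := Finset.mem_erase.2 ⟨by simp [hv], hm⟩
    have hcσ : σ.card ≤ k := by
      rw [hσdef, Finset.card_erase_of_mem hm']
      omega
    have hπeq : insert (v', w') σ = π := Finset.insert_erase hm'
    have hF := hF3 σ hcσ v w'
    have hRHS : ∑ w'' : W, X (insert (v, w'') σ) * (H.adjMatrix ℝ) w'' w' = X σ := by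
      rw [Finset.sum_eq_single w]
      · rw [Finset.insert_eq_self.2 hmσ]
        simp [SimpleGraph.adjMatrix_apply, hH]
      · intro w'' _ hne
        have hcard : (insert (v, w'') σ).card ≤ k + 1 := by
          have := Finset.card_insert_le (v, w'') σ; omega
        have h0 : X (insert (v, w'') σ) = 0 :=
          func1 _ hcard v w'' w (Finset.mem_insert_self _ _)
            (Finset.mem_insert_of_mem hmσ) hne
        simp [h0]
      · simp
    have hL1σ := hL1 σ hcσ w'
    rw [← Finset.add_sum_erase Finset.univ (fun v'' => X (insert (v'', w') σ))
      (Finset.mem_univ v')] at hL1σ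
    have hLHS : ∑ v'' : V, (G.adjMatrix ℝ) v v'' * X (insert (v'', w') σ) ≤
        X σ - X (insert (v', w') σ) := by
      rw [← Finset.add_sum_erase Finset.univ
        (fun v'' => (G.adjMatrix ℝ) v v'' * X (insert (v'', w') σ)) (Finset.mem_univ v')]
      have hA : (G.adjMatrix ℝ) v v' = 0 := by
        simp only [SimpleGraph.adjMatrix_apply, ite_eq_right_iff]
        intro h; exact absurd h hG
      rw [hA, zero_mul, zero_add]
      calc ∑ v'' ∈ Finset.univ.erase v', (G.adjMatrix ℝ) v v'' * X (insert (v'', w') σ)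
          ≤ ∑ v'' ∈ Finset.univ.erase v', X (insert (v'', w') σ) := by
            apply Finset.sum_le_sum
            intro i _
            apply mul_le_of_le_one_left (hnonneg _)
            simp only [SimpleGraph.adjMatrix_apply]
            split <;> norm_num
        _ = X σ - X (insert (v', w') σ) := by linarith
    rw [hRHS] at hF
    rw [hπeq] at hLHS
    have := hnonneg π
    linarith [hF ▸ hLHS]
  have main : ∀ π : Finset (V × W), π.card ≤ k + 1 → ¬ IsPartialIso G H π → X π = 0 := by
    intro π hc hn
    simp only [IsPartialIso, not_forall] at hn
    obtain ⟨p, hp, q, hq, hfail⟩ := hn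
    by_cases h1 : p.1 = q.1
    · by_cases h2 : p.2 = q.2
      · exact absurd ⟨iff_of_true h1 h2,
          iff_of_false (h1 ▸ G.irrefl) (h2 ▸ H.irrefl)⟩ hfail
      · exact func1 π hc p.1 p.2 q.2 (by simpa using hp)
          (by rw [h1]; simpa using hq) h2
    · by_cases h2 : p.2 = q.2
      · exact func2 π hc p.1 q.1 p.2 (by simpa using hp)
          (by rw [h2]; simpa using hq) h1
      · have hiff : ¬ (G.Adj p.1 q.1 ↔ H.Adj p.2 q.2) :=
          fun h => hfail ⟨iff_of_false h1 h2, h⟩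
        by_cases hG : G.Adj p.1 q.1
        · have hH : ¬ H.Adj p.2 q.2 := fun h => hiff ⟨fun _ => h, fun _ => hG⟩
          exact adj1 π hc p.1 p.2 q.1 q.2 (by simpa using hp) (by simpa using hq)
            h1 h2 hG hH
        · have hH : H.Adj p.2 q.2 := by
            by_contra h
            exact hiff (iff_of_false hG h)
          exact adj2 π hc p.1 p.2 q.1 q.2 (by simpa using hp) (by simpa using hq)
            h1 h2 hG hH
  exact ⟨main, fun π h w => hL1 π (by omega) w, fun π h v => hL2 π (by omega) v,
    main, hEmpty⟩
end

section
/- Let T be a finite rooted tree of depth d and let G be a finite simple graph. Then hom(T,G) = Σ_{v∈V(G)} dhom(T, T(G,v)_{≤d}), where hom(T,G) counts the homomorphisms from the underlying unrooted tree of T to G. -/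
/-- The nodes of the depth-`d` tree unfolding of `G` at `v`: walks in `G` starting
at `v` of length at most `d`, encoded as the lists of visited vertices. -/
def UNode {V : Type*} (G : SimpleGraph V) (v : V) (d : ℕ) : Type _ :=
  {l : List V // l.head? = some v ∧ l.Chain' G.Adj ∧ l.length ≤ d + 1}

/-- The depth-`d` tree unfolding of `G` at `v`, as a graph on walks from `v`:
a walk is adjacent to each of its one-edge extensions. -/
def unfoldTree {V : Type*} (G : SimpleGraph V) (v : V) (d : ℕ) :
    SimpleGraph (UNode G v d) :=
  SimpleGraph.fromRel fun l l' => ∃ x : V, l'.1 = l.1 ++ [x]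

/-- The root of the tree unfolding: the length-0 walk `(v)`. -/
def unfoldRoot {V : Type*} (G : SimpleGraph V) (v : V) (d : ℕ) : UNode G v d :=
  ⟨[v], by refine ⟨rfl, ?_, ?_⟩ <;> simp [List.Chain']⟩

/-- The number of depth-preserving, depth-surjective homomorphisms from the rooted
tree `(T, rT)` to the rooted tree `(T', rT')`, where the depth of a node is its
distance from the root. -/
noncomputable def dhomCount {α β : Type*} (T : SimpleGraph α) (rT : α)
    (T' : SimpleGraph β) (rT' : β) : ℕ :=
  Nat.card {f : α → β //
    (∀ a b, T.Adj a b → T'.Adj (f a) (f b)) ∧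
    (∀ a, T'.dist rT' (f a) = T.dist rT a) ∧
    (∀ n : ℕ, (∃ b, T'.dist rT' b = n) → ∃ a, T'.dist rT' (f a) = n)}

/-!
A homomorphism `f : T →g G` is determined by `f r` together with the walks in `G` that `f` traces
along the root paths of `T`; these walks form a depth-preserving homomorphism into the unfolding
of `G` at `f r`. Conversely, reading off the last vertex of each walk turns a depth-preserving
homomorphism into the unfolding back into a homomorphism `T →g G`, and by induction on the depth
the two constructions are inverse. Depth-surjectivity comes for free, since a rooted tree of depth
`d` has vertices at every depth `≤ d`.
-/

open SimpleGraph

section Distance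

variable {V : Type*} {G : SimpleGraph V}

lemma SimpleGraph.exists_adj_dist_eq_of_dist_eq_add_one {u v : V} {n : ℕ}
    (h : G.dist u v = n + 1) : ∃ w, G.Adj w v ∧ G.dist u w = n := by
  obtain ⟨p, hp⟩ := exists_walk_of_dist_ne_zero (by omega : G.dist u v ≠ 0)
  have hadj : G.Adj (p.getVert n) v := by
    have := p.adj_getVert_succ (i := n) (by omega)
    rwa [show n + 1 = p.length by omega, p.getVert_length] at this
  have hle : G.dist u (p.getVert n) ≤ n :=
    (dist_le (p.take n)).trans (by simp [Walk.take_length])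
  refine ⟨_, hadj, ?_⟩
  rcases hadj.diff_dist_adj (u := u) with h' | h' | h' <;> omega

lemma SimpleGraph.exists_dist_eq_of_le {u v : V} {n d : ℕ} (hv : G.dist u v = d) (hn : n ≤ d) :
    ∃ w, G.dist u w = n := by
  induction d generalizing v with
  | zero => exact ⟨u, by simp; omega⟩
  | succ d ih =>
    obtain rfl | hn := eq_or_lt_of_le hn
    · exact ⟨v, hv⟩
    · obtain ⟨w, -, hw⟩ := exists_adj_dist_eq_of_dist_eq_add_one hv
      exact ih hw (by omega)

end Distance

section TreePath

variable {α : Type*} {T : SimpleGraph α} (hT : T.IsTree) (r : α)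

noncomputable def treePath (a : α) : T.Walk r a := (hT.existsUnique_path r a).exists.choose

lemma treePath_isPath (a : α) : (treePath hT r a).IsPath :=
  (hT.existsUnique_path r a).exists.choose_spec

lemma eq_treePath {a : α} {p : T.Walk r a} (hp : p.IsPath) : p = treePath hT r a :=
  (hT.existsUnique_path r a).unique hp (treePath_isPath hT r a)

lemma length_treePath (a : α) : (treePath hT r a).length = T.dist r a := by
  obtain ⟨p, hp, hl⟩ := hT.connected.exists_path_of_dist r a
  rwa [eq_treePath hT r hp] at hl

lemma treePath_eq_concat {a b : α} (hab : T.Adj a b) (hd : T.dist r b = T.dist r a + 1) :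
    treePath hT r b = (treePath hT r a).concat hab := by
  have hpa := treePath_isPath hT r a
  have hpb := treePath_isPath hT r b
  by_cases ha : a ∈ (treePath hT r b).support
  · exact hT.isAcyclic.path_concat hpa hpb hab ha
  · have hb := hT.isAcyclic.mem_support_of_ne_mem_support_of_adj_of_isPath hpa hpb hab ha
    have := congrArg Walk.length (hT.isAcyclic.path_concat hpb hpa hab.symm hb)
    simp only [Walk.length_concat, length_treePath] at this
    omega

end TreePath

section UnfoldTree

variable {V : Type*} {G : SimpleGraph V} {v : V} {d : ℕ}

namespace UNode

lemma val_ne_nil (l : UNode G v d) : l.1 ≠ [] :=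
  fun h => by simpa [h] using l.2.1

def last (l : UNode G v d) : V := l.1.getLast l.val_ne_nil

lemma last_eq_of_val_eq_append {l l' : UNode G v d} {x : V} (h : l'.1 = l.1 ++ [x]) :
    l'.last = x := by
  rw [last, List.getLast_congr _ (by simp) h, List.getLast_append_singleton]

lemma eq_unfoldRoot_of_length_eq_one {l : UNode G v d} (h : l.1.length = 1) :
    l = unfoldRoot G v d := by
  obtain ⟨x, hx⟩ := List.length_eq_one_iff.mp h
  have hhead := l.2.1
  rw [hx, List.head?_cons, Option.some.injEq] at hhead
  exact Subtype.ext (hx.trans (congrArg (fun y => [y]) hhead))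

instance [Finite V] : Finite (UNode G v d) :=
  have := (List.finite_length_le V (d + 1)).to_subtype
  Finite.of_injective
    (fun l : UNode G v d => (⟨l.1, l.2.2.2⟩ : {l : List V | l.length ≤ d + 1}))
    fun _ _ h => Subtype.ext (congrArg Subtype.val h :)

end UNode

lemma unfoldTree_adj_iff {l l' : UNode G v d} :
    (unfoldTree G v d).Adj l l' ↔ (∃ x, l'.1 = l.1 ++ [x]) ∨ ∃ x, l.1 = l'.1 ++ [x] := by
  refine ⟨fun h => h.2, fun h => ⟨?_, h⟩⟩
  rintro rfl
  obtain ⟨x, hx⟩ | ⟨x, hx⟩ := h <;> simpa using congrArg List.length hx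

lemma unfoldTree_adj_last {l l' : UNode G v d} (h : (unfoldTree G v d).Adj l l') :
    G.Adj l.last l'.last := by
  have extend : ∀ {a b : UNode G v d} {x : V}, b.1 = a.1 ++ [x] → G.Adj a.last b.last := by
    intro a b x hx
    have hc : (a.1 ++ [x]).IsChain G.Adj := hx ▸ b.2.2.1
    rw [UNode.last_eq_of_val_eq_append hx]
    exact (List.isChain_append.mp hc).2.2 _ (List.getLast?_eq_getLast_of_ne_nil _) x rfl
  obtain ⟨x, hx⟩ | ⟨x, hx⟩ := unfoldTree_adj_iff.mp h
  · exact extend hx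
  · exact (extend hx).symm

lemma unfoldTree_adj_length {l l' : UNode G v d} (h : (unfoldTree G v d).Adj l l') :
    l'.1.length = l.1.length + 1 ∨ l.1.length = l'.1.length + 1 := by
  obtain ⟨x, hx⟩ | ⟨x, hx⟩ := unfoldTree_adj_iff.mp h
  · exact .inl (by simp [hx])
  · exact .inr (by simp [hx])

lemma UNode.val_eq_append_last_of_adj {l l' : UNode G v d} (h : (unfoldTree G v d).Adj l l')
    (hlen : l'.1.length = l.1.length + 1) : l'.1 = l.1 ++ [l'.last] := by
  obtain ⟨x, hx⟩ | ⟨x, hx⟩ := unfoldTree_adj_iff.mp h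
  · rwa [UNode.last_eq_of_val_eq_append hx]
  · simp only [hx, List.length_append, List.length_singleton] at hlen
    omega

lemma UNode.length_le_length_add_of_walk {l l' : UNode G v d}
    (p : (unfoldTree G v d).Walk l l') :
    l'.1.length ≤ l.1.length + p.length := by
  induction p with
  | nil => simp
  | @cons a b _ h _ ih =>
    have := unfoldTree_adj_length h
    simp only [Walk.length_cons]
    omega

lemma exists_walk_unfoldRoot {n : ℕ} : ∀ {l : UNode G v d}, l.1.length = n + 1 →
    ∃ p : (unfoldTree G v d).Walk (unfoldRoot G v d) l, p.length = n := by
  induction n with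
  | zero =>
    intro l hl
    rw [UNode.eq_unfoldRoot_of_length_eq_one hl]
    exact ⟨.nil, rfl⟩
  | succ n ih =>
    intro l hl
    let parent : UNode G v d :=
      ⟨l.1.dropLast, by rw [List.head?_dropLast, if_pos (by omega)]; exact l.2.1,
        l.2.2.1.prefix (List.dropLast_prefix l.1),
        by have := l.2.2.2; simp only [List.length_dropLast]; omega⟩
    have hadj : (unfoldTree G v d).Adj parent l := unfoldTree_adj_iff.mpr
      (.inl ⟨_, (List.dropLast_append_getLast l.val_ne_nil).symm⟩)
    obtain ⟨p, hp⟩ := ih (l := parent) (by simp [parent, hl])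
    exact ⟨p.concat hadj, by simp [hp]⟩

lemma unfoldTree_dist_unfoldRoot (l : UNode G v d) :
    (unfoldTree G v d).dist (unfoldRoot G v d) l + 1 = l.1.length := by
  obtain ⟨n, hn⟩ := Nat.exists_eq_add_one_of_ne_zero (List.length_pos_iff.mpr l.val_ne_nil).ne'
  obtain ⟨p, hp⟩ := exists_walk_unfoldRoot hn
  obtain ⟨q, hq⟩ := Reachable.exists_walk_length_eq_dist ⟨p⟩
  have := dist_le p
  have := UNode.length_le_length_add_of_walk q
  have : (unfoldRoot G v d).1.length = 1 := rfl
  omega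

lemma UNode.eq_unfoldRoot_of_dist_eq_zero {l : UNode G v d}
    (h : (unfoldTree G v d).dist (unfoldRoot G v d) l = 0) : l = unfoldRoot G v d :=
  eq_unfoldRoot_of_length_eq_one (by have := unfoldTree_dist_unfoldRoot l; omega)

end UnfoldTree

abbrev DepthHom {α β : Type*} (T : SimpleGraph α) (r : α) (T' : SimpleGraph β) (r' : β) :
    Type _ :=
  {f : α → β //
    (∀ a b, T.Adj a b → T'.Adj (f a) (f b)) ∧
    (∀ a, T'.dist r' (f a) = T.dist r a) ∧
    (∀ n : ℕ, (∃ b, T'.dist r' b = n) → ∃ a, T'.dist r' (f a) = n)}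

instance {α β : Type*} [Finite α] [Finite β] (T : SimpleGraph α) (r : α) (T' : SimpleGraph β)
    (r' : β) : Finite (DepthHom T r T' r') :=
  Subtype.finite

lemma dhomCount_eq_card_depthHom {α β : Type*} (T : SimpleGraph α) (r : α) (T' : SimpleGraph β)
    (r' : β) : dhomCount T r T' r' = Nat.card (DepthHom T r T' r') :=
  rfl

section HomToUnfold

variable {α V : Type*} {T : SimpleGraph α} {r : α} {G : SimpleGraph V} {d : ℕ}
variable (hT : T.IsTree) (hle : ∀ a, T.dist r a ≤ d)

noncomputable def liftToUnfold (f : T →g G) (a : α) : UNode G (f r) d :=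
  ⟨((treePath hT r a).map f).support, by
    refine ⟨?_, Walk.isChain_adj_support _, ?_⟩
    · rw [Walk.support_map, ← Walk.cons_tail_support, List.map_cons]
      rfl
    · rw [Walk.support_map, List.length_map, Walk.length_support, length_treePath]
      exact Nat.succ_le_succ (hle a)⟩

lemma last_liftToUnfold (f : T →g G) (a : α) : (liftToUnfold hT hle f a).last = f a := by
  simp [UNode.last, liftToUnfold]

lemma length_liftToUnfold (f : T →g G) (a : α) :
    (liftToUnfold hT hle f a).1.length = T.dist r a + 1 := by
  simp [liftToUnfold, length_treePath]

lemma dist_liftToUnfold (f : T →g G) (a : α) :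
    (unfoldTree G (f r) d).dist (unfoldRoot G (f r) d) (liftToUnfold hT hle f a) =
      T.dist r a := by
  have := unfoldTree_dist_unfoldRoot (liftToUnfold hT hle f a)
  rw [length_liftToUnfold] at this
  omega

lemma liftToUnfold_eq_append {a b : α} (f : T →g G) (hab : T.Adj a b)
    (hd : T.dist r b = T.dist r a + 1) :
    (liftToUnfold hT hle f b).1 = (liftToUnfold hT hle f a).1 ++ [f b] := by
  simp [liftToUnfold, treePath_eq_concat hT r hab hd]

noncomputable def liftDepthHom (hd : ∃ a, T.dist r a = d) (f : T →g G) :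
    DepthHom T r (unfoldTree G (f r) d) (unfoldRoot G (f r) d) := by
  refine ⟨liftToUnfold hT hle f, fun a b hab => ?_, dist_liftToUnfold hT hle f, ?_⟩
  · rcases hT.dist_eq_dist_add_one_of_adj r hab with hd | hd
    · exact unfoldTree_adj_iff.mpr (.inr ⟨f a, liftToUnfold_eq_append hT hle f hab.symm hd⟩)
    · exact unfoldTree_adj_iff.mpr (.inl ⟨f b, liftToUnfold_eq_append hT hle f hab hd⟩)
  · rintro n ⟨l, hl⟩
    obtain ⟨a, ha⟩ := hd
    obtain ⟨b, hb⟩ := exists_dist_eq_of_le ha (n := n)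
      (by have := unfoldTree_dist_unfoldRoot l; have := l.2.2.2; omega)
    exact ⟨b, by rw [dist_liftToUnfold, hb]⟩

namespace DepthHom

variable {v : V} (g : DepthHom T r (unfoldTree G v d) (unfoldRoot G v d))

def lastHom : T →g G := ⟨fun a => (g.1 a).last, fun h => unfoldTree_adj_last (g.2.1 _ _ h)⟩

lemma apply_root : g.1 r = unfoldRoot G v d :=
  UNode.eq_unfoldRoot_of_dist_eq_zero (by rw [g.2.2.1 r, dist_self])

lemma lastHom_root : g.lastHom r = v := by
  simp [lastHom, apply_root g, UNode.last, unfoldRoot]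

lemma val_eq_liftToUnfold (a : α) : (g.1 a).1 = (liftToUnfold hT hle g.lastHom a).1 := by
  induction hn : T.dist r a generalizing a with
  | zero =>
    obtain rfl : r = a := hT.connected.dist_eq_zero_iff.mp hn
    rw [UNode.eq_unfoldRoot_of_length_eq_one (l := liftToUnfold hT hle g.lastHom r)
      (by simp [length_liftToUnfold]), apply_root g]
    simp [unfoldRoot, lastHom_root g]
  | succ n ih =>
    obtain ⟨b, hba, hb⟩ := exists_adj_dist_eq_of_dist_eq_add_one hn
    have hlen : (g.1 a).1.length = (g.1 b).1.length + 1 := by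
      have ha := unfoldTree_dist_unfoldRoot (g.1 a)
      have hb' := unfoldTree_dist_unfoldRoot (g.1 b)
      rw [g.2.2.1] at ha hb'
      omega
    rw [UNode.val_eq_append_last_of_adj (g.2.1 b a hba) hlen, ih b hb,
      liftToUnfold_eq_append hT hle _ hba (by rw [hn, hb])]
    rfl

end DepthHom

lemma sigma_depthHom_ext {v w : V} (h : v = w)
    (g : DepthHom T r (unfoldTree G v d) (unfoldRoot G v d))
    (g' : DepthHom T r (unfoldTree G w d) (unfoldRoot G w d))
    (hval : ∀ a, (g.1 a).1 = (g'.1 a).1) :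
    (⟨v, g⟩ : Σ u, DepthHom T r (unfoldTree G u d) (unfoldRoot G u d)) = ⟨w, g'⟩ := by
  subst h
  exact congrArg _ (Subtype.ext (funext fun a => Subtype.ext (hval a)))

noncomputable def homEquivSigmaDepthHom (hd : ∃ a, T.dist r a = d) :
    (T →g G) ≃ Σ v : V, DepthHom T r (unfoldTree G v d) (unfoldRoot G v d) where
  toFun f := ⟨f r, liftDepthHom hT hle hd f⟩
  invFun g := g.2.lastHom
  left_inv f := RelHom.ext (last_liftToUnfold hT hle f)
  right_inv := fun ⟨_, g⟩ => sigma_depthHom_ext g.lastHom_root _ _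
    fun a => (g.val_eq_liftToUnfold hT hle a).symm

end HomToUnfold

theorem stmt15 {α V : Type*} [Fintype α] [Fintype V]
    (T : SimpleGraph α) (rT : α) (hT : T.IsTree) (d : ℕ)
    (hdepth : (∀ a, T.dist rT a ≤ d) ∧ (∃ a, T.dist rT a = d))
    (G : SimpleGraph V) :
    homCount T G = ∑ v : V, dhomCount T rT (unfoldTree G v d) (unfoldRoot G v d) := by
  rw [homCount, Nat.card_congr (homEquivSigmaDepthHom hT hdepth.1 hdepth.2), Nat.card_sigma]
  simp only [dhomCount_eq_card_depthHom]
end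

section
/- Let k ≥ 1 be an integer and let G and H be finite simple graphs such that the system L^{k+1}_iso(G,H) has a real solution. Then for every finite simple graph F and every path decomposition P of F of width at most k, biso((F,P),G) = biso((F,P),H). -/
/-- The number of bag-wise isomorphic homomorphisms from `(F, bag)` to `G`:
homomorphisms `f` from `F` to `G` that are injective on every bag and induce an
isomorphism from `F[B]` onto `G[f(B)]` for every bag `B`. -/
noncomputable def bisoCount {α V : Type*} (F : SimpleGraph α) {r : ℕ}
    (bag : Fin r → Finset α) (G : SimpleGraph V) : ℕ :=
  Nat.card {f : α → V //
    (∀ a b, F.Adj a b → G.Adj (f a) (f b)) ∧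
    ∀ i : Fin r, Set.InjOn f (bag i) ∧
      ∀ a ∈ bag i, ∀ b ∈ bag i, (F.Adj a b ↔ G.Adj (f a) (f b))}

/-
A solution `X` of `L^{k+1}_iso(G, H)` is a weight `K(S, g, h) = X({(g a, h a) | a ∈ S})` on pairs
of maps of a set `S` of at most `k + 1` vertices of `F` into `G` and into `H`. Equations (L1) and
(L2) let one sum out a vertex of `S` on either side, and (L3) says that `K(S, g, h) ≠ 0` forces
`g` and `h` to induce the same isomorphism type on `S`. The indicator of `g = h` on `S` is a weight
of the same kind for the pair `(H, H)`.

Sweep the path decomposition bag by bag, with `U_i = B_0 ∪ ⋯ ∪ B_{i-1}`, and sum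
`K(B_i ∩ U_i, g, h)` over the maps `g` of `U_i` that are isomorphisms on every earlier bag.
Because `B_{i+1} ∩ U_{i+1}` lies in `B_i`, marginalising over the bag `B_i` turns step `i + 1` of
this sum into a sum over step `i` in which `G` no longer occurs. So both weights give the same
sums, and once no bag is left, these sums count bag-wise isomorphic homomorphisms into `G` and
into `H`.
-/

open Finset

section IsoOn

variable {α V W : Type*} {F : SimpleGraph α} {G : SimpleGraph V}

def IsIsoOn (F : SimpleGraph α) (G : SimpleGraph V) (S : Finset α) (g : α → V) : Prop :=
  Set.InjOn g S ∧ ∀ a ∈ S, ∀ b ∈ S, (F.Adj a b ↔ G.Adj (g a) (g b))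

lemma isIsoOn_congr {S : Finset α} {g g' : α → V}
    (h : ∀ a ∈ S, g a = g' a) : IsIsoOn F G S g ↔ IsIsoOn F G S g' := by
  unfold IsIsoOn
  rw [Set.EqOn.injOn_iff h]
  refine and_congr_right fun _ => forall₂_congr fun a ha => forall₂_congr fun b hb => ?_
  rw [h a ha, h b hb]

lemma isIsoOn_iff_of_isPartialIso [DecidableEq V] [DecidableEq W] {H : SimpleGraph W}
    {S : Finset α} {g : α → V} {h : α → W}
    (hgh : IsPartialIso G H (S.image fun a => (g a, h a))) :
    IsIsoOn F G S g ↔ IsIsoOn F H S h := by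
  have key a (ha : a ∈ S) b (hb : b ∈ S) :=
    hgh _ (mem_image_of_mem _ ha) _ (mem_image_of_mem _ hb)
  unfold IsIsoOn Set.InjOn
  refine and_congr (forall₂_congr fun a ha => forall₂_congr fun b hb => ?_)
    (forall₂_congr fun a ha => forall₂_congr fun b hb => ?_)
  · rw [(key a ha b hb).1]
  · rw [(key a ha b hb).2]

end IsoOn

section FinsetLemmas

variable {α : Type*} [DecidableEq α]

lemma Finset.piecewise_insert_update {γ : Type*} {N : Finset α} {a : α} (ha : a ∉ N)
    (ν g : α → γ) (b : γ) :
    (insert a N).piecewise (Function.update ν a b) g = Function.update (N.piecewise ν g) a b := by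
  rw [piecewise_insert, Function.update_self]
  congr 1
  exact N.piecewise_congr (fun x hx => Function.update_of_ne (ne_of_mem_of_not_mem hx ha) _ _)
    fun _ _ => rfl

lemma Finset.image_insert_update {β γ : Type*} [DecidableEq γ] {S : Finset α} {a : α}
    (ha : a ∉ S) (f : α → β → γ) (g : α → β) (b : β) :
    (insert a S).image (fun x => f x (Function.update g a b x))
      = insert (f a b) (S.image fun x => f x (g x)) := by
  rw [image_insert, Function.update_self]
  congr 1
  exact image_congr fun x hx => by rw [Function.update_of_ne (ne_of_mem_of_not_mem hx ha)]

def prefixUnion (B : ℕ → Finset α) (i : ℕ) : Finset α := (range i).biUnion B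

lemma prefixUnion_zero (B : ℕ → Finset α) : prefixUnion B 0 = ∅ := rfl

lemma prefixUnion_succ (B : ℕ → Finset α) (i : ℕ) :
    prefixUnion B (i + 1) = prefixUnion B i ∪ B i := by
  rw [prefixUnion, range_add_one, biUnion_insert, union_comm, prefixUnion]

lemma subset_prefixUnion (B : ℕ → Finset α) {i j : ℕ} (hj : j < i) : B j ⊆ prefixUnion B i :=
  subset_biUnion_of_mem B (mem_range.2 hj)

end FinsetLemmas

section FunsOn

variable {α β : Type*} [Fintype α] [DecidableEq α] [Fintype β] [DecidableEq β]

-- Maps `A → β` are encoded as functions `α → β` that are constant `d` off `A`.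
def funsOn (A : Finset α) (d : β) : Finset (α → β) :=
  univ.filter fun η => ∀ a ∉ A, η a = d

@[simp]
lemma mem_funsOn {A : Finset α} {d : β} {η : α → β} : η ∈ funsOn A d ↔ ∀ a ∉ A, η a = d := by
  simp [funsOn]

lemma funsOn_empty (d : β) : funsOn (∅ : Finset α) d = {fun _ => d} := by
  ext η
  simp [funext_iff]

lemma sum_funsOn_insert {M : Type*} [AddCommMonoid M] {A : Finset α} {a : α} (ha : a ∉ A)
    (d : β) (f : (α → β) → M) :
    ∑ η ∈ funsOn (insert a A) d, f η = ∑ η ∈ funsOn A d, ∑ b, f (Function.update η a b) := by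
  rw [← sum_product' (funsOn A d) univ fun η b => f (Function.update η a b)]
  refine sum_nbij' (fun η => (Function.update η a d, η a)) (fun q => Function.update q.1 a q.2)
    ?_ ?_ ?_ ?_ ?_
  · intro η hη
    simp only [mem_product, mem_funsOn, mem_univ, and_true] at hη ⊢
    intro x hx
    by_cases hxa : x = a
    · simp [hxa]
    · simp [hxa, hη x (by simp [hxa, hx])]
  · intro q hq
    simp only [mem_product, mem_funsOn, mem_univ, and_true] at hq ⊢
    intro x hx
    rw [Function.update_of_ne (by grind)]
    exact hq x (by grind)
  · intro η _; simp
  · intro q hq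
    simp only [mem_product, mem_funsOn] at hq
    simp only [Function.update_idem, Function.update_self]
    rw [← hq.1 a ha, Function.update_eq_self]
  · intro η _; simp

lemma sum_funsOn_union {M : Type*} [AddCommMonoid M] {A N : Finset α} (hAN : Disjoint A N)
    (d : β) (f : (α → β) → M) :
    ∑ η ∈ funsOn (A ∪ N) d, f η = ∑ η ∈ funsOn A d, ∑ ν ∈ funsOn N d, f (N.piecewise ν η) := by
  induction N using Finset.induction_on generalizing f with
  | empty => simp [funsOn_empty]
  | @insert a N ha ih =>
    have haA : a ∉ A := fun h => disjoint_left.1 hAN h (mem_insert_self a N)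
    rw [union_insert, sum_funsOn_insert (by simp [haA, ha]),
      ih (disjoint_of_subset_right (subset_insert a N) hAN)]
    refine sum_congr rfl fun η _ => ?_
    simp only [sum_funsOn_insert ha, piecewise_insert_update ha]

lemma sum_funsOn_piecewise_of_sum_update {M : Type*} [AddCommMonoid M]
    {Φ : Finset α → (α → β) → M} {n : ℕ}
    (hΦ : ∀ S a, a ∉ S → S.card < n → ∀ g, ∑ b, Φ (insert a S) (Function.update g a b) = Φ S g)
    {C N : Finset α} (hCN : Disjoint C N) (hcard : (C ∪ N).card ≤ n) (d : β) (g : α → β) :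
    ∑ ν ∈ funsOn N d, Φ (C ∪ N) (N.piecewise ν g) = Φ C g := by
  induction N using Finset.induction_on with
  | empty => simp [funsOn_empty]
  | @insert a N ha ih =>
    have haC : a ∉ C := fun h => disjoint_left.1 hCN h (mem_insert_self a N)
    have hCN' : Disjoint C N := disjoint_of_subset_right (subset_insert a N) hCN
    rw [union_insert] at hcard ⊢
    have haCN : a ∉ C ∪ N := by simp [haC, ha]
    rw [card_insert_of_notMem haCN] at hcard
    rw [← ih hCN' (Nat.le_of_succ_le hcard), sum_funsOn_insert ha]
    refine sum_congr rfl fun ν _ => ?_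
    simp only [piecewise_insert_update ha]
    exact hΦ _ a haCN hcard _

end FunsOn

section IsoWeight

variable {α V W : Type*} [DecidableEq α] [Fintype V] [DecidableEq V]
  [Fintype W] [DecidableEq W]

structure IsIsoWeight (n : ℕ) (G : SimpleGraph V) (H : SimpleGraph W)
    (K : Finset α → (α → V) → (α → W) → ℝ) : Prop where
  empty (g : α → V) (h : α → W) : K ∅ g h = 1
  sum_update_left (S : Finset α) (a : α) (ha : a ∉ S) (hS : S.card < n) (g : α → V)
    (h : α → W) : ∑ v, K (insert a S) (Function.update g a v) h = K S g h
  sum_update_right (S : Finset α) (a : α) (ha : a ∉ S) (hS : S.card < n) (g : α → V)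
    (h : α → W) : ∑ w, K (insert a S) g (Function.update h a w) = K S g h
  isPartialIso (S : Finset α) (g : α → V) (h : α → W) (hS : S.card ≤ n) (hK : K S g h ≠ 0) :
    IsPartialIso G H (S.image fun a => (g a, h a))

lemma IsLisoSolution.isIsoWeight {n : ℕ} {G : SimpleGraph V} {H : SimpleGraph W}
    {X : Finset (V × W) → ℝ} (hX : IsLisoSolution n G H X) :
    IsIsoWeight n G H fun (S : Finset α) g h => X (S.image fun a => (g a, h a)) where
  empty _ _ := by simpa using hX.2.2.2
  sum_update_left S a ha hS g h := by
    simp only [image_insert_update ha (fun x v => (v, h x))]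
    exact hX.1 _ (card_image_le.trans_lt hS) (h a)
  sum_update_right S a ha hS g h := by
    simp only [image_insert_update ha (fun x w => (g x, w))]
    exact hX.2.1 _ (card_image_le.trans_lt hS) (g a)
  isPartialIso S g h hS hK := by
    by_contra hnot
    exact hK (hX.2.2.1 _ (card_image_le.trans hS) hnot)

lemma isIsoWeight_eqOn (n : ℕ) (H : SimpleGraph W) :
    IsIsoWeight n H H fun (S : Finset α) g h => if ∀ a ∈ S, g a = h a then (1 : ℝ) else 0 where
  empty _ _ := by simp
  sum_update_left S a ha _ g h := by
    have key (v : W) : (∀ x ∈ insert a S, Function.update g a v x = h x) ↔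
        v = h a ∧ ∀ x ∈ S, g x = h x := by
      rw [forall_mem_insert, Function.update_self]
      exact and_congr_right' <| forall₂_congr fun x hx => by
        rw [Function.update_of_ne (ne_of_mem_of_not_mem hx ha)]
    simp_rw [key, ite_and, sum_ite_eq', mem_univ, if_true]
  sum_update_right S a ha _ g h := by
    have key (w : W) : (∀ x ∈ insert a S, g x = Function.update h a w x) ↔
        g a = w ∧ ∀ x ∈ S, g x = h x := by
      rw [forall_mem_insert, Function.update_self]
      exact and_congr_right' <| forall₂_congr fun x hx => by
        rw [Function.update_of_ne (ne_of_mem_of_not_mem hx ha)]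
    simp_rw [key, ite_and, sum_ite_eq, mem_univ, if_true]
  isPartialIso S g h _ hK := by
    have hgh : ∀ a ∈ S, g a = h a := by by_contra hne; exact hK (if_neg hne)
    rintro _ hp _ hq
    obtain ⟨x, hx, rfl⟩ := mem_image.1 hp
    obtain ⟨y, hy, rfl⟩ := mem_image.1 hq
    simp [hgh x hx, hgh y hy]

open Classical in
lemma IsIsoWeight.ite_isIsoOn_eq {n : ℕ} {G : SimpleGraph V} {H : SimpleGraph W}
    {K : Finset α → (α → V) → (α → W) → ℝ} (hK : IsIsoWeight n G H K) (F : SimpleGraph α)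
    {S : Finset α} (hS : S.card ≤ n) (g : α → V) (h : α → W) :
    (if IsIsoOn F G S g then K S g h else 0) = if IsIsoOn F H S h then K S g h else 0 := by
  by_cases h0 : K S g h = 0
  · simp [h0]
  · rw [if_congr (isIsoOn_iff_of_isPartialIso (hK.isPartialIso S g h hS h0)) rfl rfl]

end IsoWeight

section Prefix

variable {α V : Type*} [Fintype α] [DecidableEq α] [Fintype V] [DecidableEq V]

open Classical in
noncomputable def prefixMaps (F : SimpleGraph α) (G : SimpleGraph V) (B : ℕ → Finset α) (d : V)
    (i : ℕ) : Finset (α → V) :=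
  (funsOn (prefixUnion B i) d).filter fun g => ∀ j < i, IsIsoOn F G (B j) g

lemma prefixMaps_zero (F : SimpleGraph α) (G : SimpleGraph V) (B : ℕ → Finset α) (d : V) :
    prefixMaps F G B d 0 = {fun _ => d} := by
  simp [prefixMaps, prefixUnion_zero, funsOn_empty]

open Classical in
lemma sum_prefixMaps_succ {M : Type*} [AddCommMonoid M] (F : SimpleGraph α) (G : SimpleGraph V)
    (B : ℕ → Finset α) (d : V) (i : ℕ) (φ : (α → V) → M) :
    ∑ g ∈ prefixMaps F G B d (i + 1), φ g =
      ∑ g ∈ prefixMaps F G B d i, ∑ ν ∈ funsOn (B i \ prefixUnion B i) d,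
        if IsIsoOn F G (B i) ((B i \ prefixUnion B i).piecewise ν g)
        then φ ((B i \ prefixUnion B i).piecewise ν g) else 0 := by
  set N := B i \ prefixUnion B i
  have hU : prefixUnion B (i + 1) = prefixUnion B i ∪ N := by
    rw [prefixUnion_succ, union_sdiff_self_eq_union]
  have hearlier (g ν : α → V) {j : ℕ} (hj : j < i) :
      IsIsoOn F G (B j) (N.piecewise ν g) ↔ IsIsoOn F G (B j) g :=
    isIsoOn_congr fun a ha => piecewise_eq_of_notMem _ _ _
      fun haN => (mem_sdiff.1 haN).2 (subset_prefixUnion B hj ha)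
  rw [prefixMaps, sum_filter, hU, sum_funsOn_union disjoint_sdiff, prefixMaps, sum_filter]
  refine sum_congr rfl fun g _ => ?_
  split_ifs with hg
  · refine sum_congr rfl fun ν _ => if_congr ?_ rfl rfl
    rw [Nat.forall_lt_succ_right]
    exact and_iff_right fun j hj => (hearlier g ν hj).2 (hg j hj)
  · refine sum_eq_zero fun ν _ => if_neg fun h => hg fun j hj => ?_
    exact (hearlier g ν hj).1 (h j (Nat.lt_succ_of_lt hj))

end Prefix

namespace IsIsoWeight

variable {α V W : Type*} [Fintype α] [DecidableEq α] [Fintype V] [DecidableEq V]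
  [Fintype W] [DecidableEq W] {n : ℕ} {G : SimpleGraph V} {H : SimpleGraph W}
  {K : Finset α → (α → V) → (α → W) → ℝ}

lemma sum_funsOn_piecewise_left (hK : IsIsoWeight n G H K) {C N : Finset α}
    (hCN : Disjoint C N) (hcard : (C ∪ N).card ≤ n) (d : V) (g : α → V) (h : α → W) :
    ∑ ν ∈ funsOn N d, K (C ∪ N) (N.piecewise ν g) h = K C g h :=
  sum_funsOn_piecewise_of_sum_update (Φ := fun S g => K S g h)
    (fun S a ha hS g => hK.sum_update_left S a ha hS g h) hCN hcard d g

lemma sum_funsOn_piecewise_right (hK : IsIsoWeight n G H K) {C N : Finset α}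
    (hCN : Disjoint C N) (hcard : (C ∪ N).card ≤ n) (d : W) (g : α → V) (h : α → W) :
    ∑ μ ∈ funsOn N d, K (C ∪ N) g (N.piecewise μ h) = K C g h :=
  sum_funsOn_piecewise_of_sum_update (Φ := fun S h => K S g h)
    (fun S a ha hS h => hK.sum_update_right S a ha hS g h) hCN hcard d h

open Classical in
lemma sum_prefixMaps_succ_bag (hK : IsIsoWeight n G H K) (F : SimpleGraph α)
    (B : ℕ → Finset α) (dV : V) {i : ℕ} (hBi : (B i).card ≤ n) (h : α → W) :
    ∑ g ∈ prefixMaps F G B dV (i + 1), K (B i) g h =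
      if IsIsoOn F H (B i) h
      then ∑ g ∈ prefixMaps F G B dV i, K (B i ∩ prefixUnion B i) g h else 0 := by
  have hsplit : B i ∩ prefixUnion B i ∪ B i \ prefixUnion B i = B i := by
    rw [union_comm, sdiff_union_inter]
  rw [sum_prefixMaps_succ]
  simp_rw [hK.ite_isIsoOn_eq F hBi, sum_ite_irrel, sum_const_zero]
  congr 1
  refine sum_congr rfl fun g _ => ?_
  have := hK.sum_funsOn_piecewise_left (disjoint_sdiff_inter _ _).symm (hsplit ▸ hBi) dV g h
  rwa [hsplit] at this

lemma sum_prefixMaps_eq_sum_funsOn (hK : IsIsoWeight n G H K) (F : SimpleGraph α)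
    (B : ℕ → Finset α) (dV : V) (dW : W) (j : ℕ) {S T : Finset α} (hST : S ⊆ T)
    (hT : T.card ≤ n) (h : α → W) :
    ∑ g ∈ prefixMaps F G B dV j, K S g h =
      ∑ μ ∈ funsOn (T \ S) dW, ∑ g ∈ prefixMaps F G B dV j, K T g ((T \ S).piecewise μ h) := by
  rw [sum_comm]
  refine sum_congr rfl fun g _ => ?_
  have := hK.sum_funsOn_piecewise_right disjoint_sdiff
    (by rwa [union_sdiff_of_subset hST]) dW g h
  rw [union_sdiff_of_subset hST] at this
  exact this.symm

open Classical in
lemma sum_prefixMaps_succ_of_subset (hK : IsIsoWeight n G H K) (F : SimpleGraph α)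
    (B : ℕ → Finset α) (dV : V) (dW : W) {i : ℕ} (hBi : (B i).card ≤ n) {S : Finset α}
    (hS : S ⊆ B i) (h : α → W) :
    ∑ g ∈ prefixMaps F G B dV (i + 1), K S g h =
      ∑ μ ∈ funsOn (B i \ S) dW,
        if IsIsoOn F H (B i) ((B i \ S).piecewise μ h)
        then ∑ g ∈ prefixMaps F G B dV i, K (B i ∩ prefixUnion B i) g ((B i \ S).piecewise μ h)
        else 0 := by
  rw [hK.sum_prefixMaps_eq_sum_funsOn F B dV dW (i + 1) hS hBi]
  simp_rw [hK.sum_prefixMaps_succ_bag F B dV hBi]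

theorem sum_prefixMaps_eq {V' : Type*} [Fintype V'] [DecidableEq V'] {G' : SimpleGraph V'}
    {K' : Finset α → (α → V') → (α → W) → ℝ} (hK : IsIsoWeight n G H K)
    (hK' : IsIsoWeight n G' H K') (F : SimpleGraph α) {B : ℕ → Finset α}
    (hB : ∀ i, (B i).card ≤ n) (hpath : ∀ i, B (i + 1) ∩ prefixUnion B (i + 1) ⊆ B i)
    (dV : V) (dV' : V') (dW : W) (i : ℕ) (h : α → W) :
    ∑ g ∈ prefixMaps F G B dV i, K (B i ∩ prefixUnion B i) g h =
      ∑ g ∈ prefixMaps F G' B dV' i, K' (B i ∩ prefixUnion B i) g h := by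
  induction i generalizing h with
  | zero => simp [prefixUnion_zero, prefixMaps_zero, hK.empty, hK'.empty]
  | succ i ih =>
    rw [hK.sum_prefixMaps_succ_of_subset F B dV dW (hB i) (hpath i),
      hK'.sum_prefixMaps_succ_of_subset F B dV' dW (hB i) (hpath i)]
    simp_rw [ih]

end IsIsoWeight

theorem IsLisoSolution.card_prefixMaps_eq {α V W : Type*} [Fintype α] [DecidableEq α]
    [Fintype V] [DecidableEq V] [Fintype W] [DecidableEq W] {n : ℕ} {G : SimpleGraph V}
    {H : SimpleGraph W} {X : Finset (V × W) → ℝ} (hX : IsLisoSolution n G H X)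
    (F : SimpleGraph α) {B : ℕ → Finset α} (hB : ∀ i, (B i).card ≤ n)
    (hpath : ∀ i, B (i + 1) ∩ prefixUnion B (i + 1) ⊆ B i) {r : ℕ} (hr : B r = ∅)
    (dV : V) (dW : W) :
    (prefixMaps F G B dV r).card = (prefixMaps F H B dW r).card := by
  have := hX.isIsoWeight.sum_prefixMaps_eq (isIsoWeight_eqOn n H) F hB hpath dV dW dW r
    fun _ => dW
  simpa [hr, hX.2.2.2] using this

section PathDecomp

variable {α : Type*} {r : ℕ}

def bagSeq (bag : Fin r → Finset α) (i : ℕ) : Finset α :=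
  if h : i < r then bag ⟨i, h⟩ else ∅

lemma card_bagSeq_le {bag : Fin r → Finset α} {m : ℕ} (hbag : ∀ i, (bag i).card ≤ m) (i : ℕ) :
    (bagSeq bag i).card ≤ m := by
  unfold bagSeq
  split_ifs
  · exact hbag _
  · simp

lemma forall_isIsoOn_bagSeq_iff {V : Type*} {F : SimpleGraph α} {G : SimpleGraph V}
    {bag : Fin r → Finset α} {g : α → V} :
    (∀ j < r, IsIsoOn F G (bagSeq bag j) g) ↔ ∀ i, IsIsoOn F G (bag i) g := by
  rw [Fin.forall_iff]
  exact forall₂_congr fun j hj => by rw [bagSeq, dif_pos hj]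

variable [DecidableEq α] {F : SimpleGraph α} {bag : Fin r → Finset α}

lemma IsPathDecomp.bagSeq_inter_subset (hP : IsPathDecomp F bag) (i : ℕ) :
    bagSeq bag (i + 1) ∩ prefixUnion (bagSeq bag) (i + 1) ⊆ bagSeq bag i := by
  intro a ha
  obtain ⟨ha, haU⟩ := mem_inter.1 ha
  obtain ⟨j, hj, haj⟩ := mem_biUnion.1 haU
  rw [mem_range] at hj
  unfold bagSeq at ha haj ⊢
  split_ifs at ha with hi
  · rw [dif_pos (by omega)] at haj
    rw [dif_pos (by omega)]
    exact hP.2.2 a _ _ ⟨i + 1, hi⟩ (Fin.mk_le_mk.2 (by omega)) (Fin.mk_le_mk.2 (by omega)) haj ha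
  · simp at ha

lemma IsPathDecomp.prefixUnion_bagSeq [Fintype α] (hP : IsPathDecomp F bag) :
    prefixUnion (bagSeq bag) r = univ := by
  refine eq_univ_of_forall fun a => ?_
  obtain ⟨i, hi⟩ := hP.1 a
  exact subset_prefixUnion _ i.isLt (by rwa [bagSeq, dif_pos i.isLt])

lemma bisoCount_eq_card_prefixMaps [Fintype α] {V : Type*} [Fintype V] [DecidableEq V]
    (hP : IsPathDecomp F bag) (G : SimpleGraph V) (d : V) :
    bisoCount F bag G = (prefixMaps F G (bagSeq bag) d r).card := by
  classical
  rw [bisoCount, Nat.card_eq_fintype_card, Fintype.card_subtype, prefixMaps,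
    hP.prefixUnion_bagSeq]
  congr 1
  ext g
  simp only [mem_filter, mem_funsOn, mem_univ, not_true_eq_false, IsEmpty.forall_iff,
    implies_true, true_and, forall_isIsoOn_bagSeq_iff]
  refine ⟨fun h => h.2, fun h => ⟨fun a b hab => ?_, h⟩⟩
  obtain ⟨i, ha, hb⟩ := hP.2.1 a b hab
  exact ((h i).2 a ha b hb).1 hab

end PathDecomp

lemma bisoCount_congr {α V W : Type*} (F : SimpleGraph α) {r : ℕ} (bag : Fin r → Finset α)
    {G : SimpleGraph V} {H : SimpleGraph W} (e : G ≃g H) :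
    bisoCount F bag G = bisoCount F bag H := by
  refine Nat.card_congr (Equiv.subtypeEquiv ((Equiv.refl α).arrowCongr e.toEquiv) fun f => ?_)
  simp [Set.InjOn, e.map_adj_iff]

lemma IsLisoSolution.nonempty_iff {V W : Type*} [Fintype V] [Fintype W] [DecidableEq V]
    [DecidableEq W] {n : ℕ} {G : SimpleGraph V} {H : SimpleGraph W} {X : Finset (V × W) → ℝ}
    (hX : IsLisoSolution n G H X) (hn : 1 ≤ n) : Nonempty V ↔ Nonempty W := by
  obtain ⟨hsumV, hsumW, -, hempty⟩ := hX
  constructor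
  · rintro ⟨v⟩
    by_contra hW
    simpa [not_nonempty_iff.1 hW, hempty] using hsumW ∅ (by simpa) v
  · rintro ⟨w⟩
    by_contra hV
    simpa [not_nonempty_iff.1 hV, hempty] using hsumV ∅ (by simpa) w

theorem stmt18_general (k : ℕ) {V W : Type*} [Fintype V] [Fintype W]
    [DecidableEq V] [DecidableEq W]
    (G : SimpleGraph V) (H : SimpleGraph W)
    (hX : ∃ X : Finset (V × W) → ℝ, IsLisoSolution (k + 1) G H X) :
    ∀ (p : ℕ) (F : SimpleGraph (Fin p)) (r : ℕ) (bag : Fin r → Finset (Fin p)),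
      IsPathDecomp F bag → (∀ i, (bag i).card ≤ k + 1) →
      bisoCount F bag G = bisoCount F bag H := by
  obtain ⟨X, hX⟩ := hX
  intro p F r bag hP hwidth
  rcases isEmpty_or_nonempty V with hV | ⟨⟨dV⟩⟩
  · have : IsEmpty W := not_nonempty_iff.1 fun hW =>
      not_nonempty_iff.2 hV ((hX.nonempty_iff le_add_self).2 hW)
    exact bisoCount_congr F bag ⟨Equiv.equivOfIsEmpty V W, fun {v} => isEmptyElim v⟩
  · obtain ⟨dW⟩ := (hX.nonempty_iff le_add_self).1 ⟨dV⟩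
    rw [bisoCount_eq_card_prefixMaps hP G dV, bisoCount_eq_card_prefixMaps hP H dW]
    exact hX.card_prefixMaps_eq F (card_bagSeq_le hwidth) hP.bagSeq_inter_subset
      (dif_neg (lt_irrefl r)) dV dW

theorem stmt18 (k : ℕ) (hk : 1 ≤ k) {V W : Type*} [Fintype V] [Fintype W]
    [DecidableEq V] [DecidableEq W]
    (G : SimpleGraph V) (H : SimpleGraph W)
    (hX : ∃ X : Finset (V × W) → ℝ, IsLisoSolution (k + 1) G H X) :
    ∀ (p : ℕ) (F : SimpleGraph (Fin p)) (r : ℕ) (bag : Fin r → Finset (Fin p)),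
      IsPathDecomp F bag → (∀ i, (bag i).card ≤ k + 1) →
      bisoCount F bag G = bisoCount F bag H :=
  stmt18_general k G H hX
end
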